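/- arXiv:1901.08650 — 3 statements merged into one kernel-verified Lean document; each statement's English description precedes it below -/
import Mathlib

section
/- Let P₁ and P₂ be solutions of the PRE on (−∞, t_f] with final values P₁(t_f) = G₁ and P₂(t_f) = G₂, where G₁, G₂ are symmetric positive semidefinite and G₁ ≤ G₂ in the Loewner order. Then P₁(t) ≤ P₂(t) in the Loewner order for all t ≤ t_f. (Paper's Lemma 3: P(t; t_f, G₁) ≤ P(t; t_f, G₂).) -/
/-
The difference `Δ = P₂ - P₁` of two solutions satisfies the linear equation
`-Δ' = (Aᵀ - P₂ S) Δ + Δ (A - S P₁)` with `S = B R⁻¹ Bᵀ`, and for equations of this form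
positivity propagates backwards in time. Adding `ε e^{K (t_f - t)} I` with `K` large makes the
derivative of `xᵀ Δ x` negative along every null vector `x`, which is impossible at the last time
the perturbed matrix fails to be positive definite; then let `ε → 0`.
The comparison needs each `Pᵢ` to be symmetric. This follows in the same way, because `Pᵀ` solves
the same equation with the same terminal value: comparison applied to the symmetric dilation of
`Pᵀ - P` and to its negative forces `Pᵀ = P`.
-/

open Matrix Filter Topology

/-- Frobenius norm of a real square matrix. -/
noncomputable def frobNorm {n : ℕ} (X : Matrix (Fin n) (Fin n) ℝ) : ℝ :=
  Real.sqrt (∑ i, ∑ j, (X i j) ^ 2)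

/-- `P` is a solution of the periodic Riccati equation
`−P'(t) = A(t)ᵀ P(t) + P(t) A(t) − P(t) B(t) R(t)⁻¹ B(t)ᵀ P(t) + C(t)ᵀ C(t)`
on the set `S` (entrywise derivative). -/
def IsPRESolOn {n m r : ℕ} (A : ℝ → Matrix (Fin n) (Fin n) ℝ)
    (B : ℝ → Matrix (Fin n) (Fin m) ℝ) (C : ℝ → Matrix (Fin r) (Fin n) ℝ)
    (R : ℝ → Matrix (Fin m) (Fin m) ℝ) (P : ℝ → Matrix (Fin n) (Fin n) ℝ)
    (S : Set ℝ) : Prop :=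
  ∀ t ∈ S, ∀ i j, HasDerivAt (fun τ => P τ i j)
    ((-((A t)ᵀ * P t + P t * A t - P t * B t * (R t)⁻¹ * (B t)ᵀ * P t + (C t)ᵀ * C t)) i j) t

open Set

section MatrixDeriv

variable {l m n : Type*}

def HasMatrixDerivAt (Φ : ℝ → Matrix m n ℝ) (Φ' : Matrix m n ℝ) (t : ℝ) : Prop :=
  ∀ i j, HasDerivAt (fun τ => Φ τ i j) (Φ' i j) t

variable {Φ Ψ : ℝ → Matrix m n ℝ} {Φ' Ψ' : Matrix m n ℝ} {t : ℝ}

theorem hasMatrixDerivAt_const (M : Matrix m n ℝ) : HasMatrixDerivAt (fun _ => M) 0 t :=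
  fun i j => hasDerivAt_const t (M i j)

namespace HasMatrixDerivAt

theorem continuousAt (h : HasMatrixDerivAt Φ Φ' t) : ContinuousAt Φ t :=
  continuousAt_pi.2 fun i => continuousAt_pi.2 fun j => (h i j).continuousAt

theorem add (hΦ : HasMatrixDerivAt Φ Φ' t) (hΨ : HasMatrixDerivAt Ψ Ψ' t) :
    HasMatrixDerivAt (fun τ => Φ τ + Ψ τ) (Φ' + Ψ') t :=
  fun i j => (hΦ i j).add (hΨ i j)

theorem sub (hΦ : HasMatrixDerivAt Φ Φ' t) (hΨ : HasMatrixDerivAt Ψ Ψ' t) :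
    HasMatrixDerivAt (fun τ => Φ τ - Ψ τ) (Φ' - Ψ') t :=
  fun i j => (hΦ i j).sub (hΨ i j)

theorem neg (hΦ : HasMatrixDerivAt Φ Φ' t) : HasMatrixDerivAt (fun τ => -Φ τ) (-Φ') t :=
  fun i j => (hΦ i j).neg

theorem transpose (hΦ : HasMatrixDerivAt Φ Φ' t) :
    HasMatrixDerivAt (fun τ => (Φ τ)ᵀ) (Φ')ᵀ t :=
  fun i j => hΦ j i

theorem _root_.HasDerivAt.smul_hasMatrixDerivAt {c : ℝ → ℝ} {c' : ℝ} (hc : HasDerivAt c c' t)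
    (M : Matrix m n ℝ) : HasMatrixDerivAt (fun τ => c τ • M) (c' • M) t :=
  fun i j => hc.mul_const (M i j)

theorem fromBlocks {Φ₁₁ : ℝ → Matrix l l ℝ} {Φ₁₂ : ℝ → Matrix l n ℝ} {Φ₂₁ : ℝ → Matrix m l ℝ}
    {Φ₂₂ : ℝ → Matrix m n ℝ} {Φ₁₁' Φ₁₂' Φ₂₁' Φ₂₂'}
    (h₁₁ : HasMatrixDerivAt Φ₁₁ Φ₁₁' t) (h₁₂ : HasMatrixDerivAt Φ₁₂ Φ₁₂' t)
    (h₂₁ : HasMatrixDerivAt Φ₂₁ Φ₂₁' t) (h₂₂ : HasMatrixDerivAt Φ₂₂ Φ₂₂' t) :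
    HasMatrixDerivAt (fun τ => Matrix.fromBlocks (Φ₁₁ τ) (Φ₁₂ τ) (Φ₂₁ τ) (Φ₂₂ τ))
      (Matrix.fromBlocks Φ₁₁' Φ₁₂' Φ₂₁' Φ₂₂') t := by
  rintro (i | i) (j | j)
  exacts [h₁₁ i j, h₁₂ i j, h₂₁ i j, h₂₂ i j]

theorem dotProduct_mulVec [Fintype m] [Fintype n] (hΦ : HasMatrixDerivAt Φ Φ' t)
    (x : m → ℝ) (y : n → ℝ) :
    HasDerivAt (fun τ => x ⬝ᵥ Φ τ *ᵥ y) (x ⬝ᵥ Φ' *ᵥ y) t := by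
  simp only [dotProduct, Matrix.mulVec, Finset.mul_sum]
  exact HasDerivAt.fun_sum fun i _ => HasDerivAt.fun_sum fun j _ =>
    ((hΦ i j).mul_const (y j)).const_mul (x i)

end HasMatrixDerivAt

end MatrixDeriv

namespace Matrix

variable {ι : Type*} [Fintype ι]

theorem dotProduct_mulVec_le_sum_abs_mul (W : Matrix ι ι ℝ) (x : ι → ℝ) :
    x ⬝ᵥ W *ᵥ x ≤ (∑ i, ∑ j, |W i j|) * (x ⬝ᵥ x) := by
  have hsq : ∀ i, x i * x i ≤ x ⬝ᵥ x := fun i =>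
    Finset.single_le_sum (fun j _ => mul_self_nonneg (x j)) (Finset.mem_univ i)
  have hprod : ∀ i j, |x i * x j| ≤ x ⬝ᵥ x := fun i j => by
    rw [abs_mul]
    rcases le_total |x i| |x j| with h | h
    · nlinarith [abs_nonneg (x i), abs_mul_abs_self (x j), hsq j]
    · nlinarith [abs_nonneg (x j), abs_mul_abs_self (x i), hsq i]
  have hexpand : x ⬝ᵥ W *ᵥ x = ∑ i, ∑ j, x i * (W i j * x j) := by
    simp only [dotProduct, Matrix.mulVec, Finset.mul_sum]
  rw [hexpand, Finset.sum_mul]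
  refine Finset.sum_le_sum fun i _ => ?_
  rw [Finset.sum_mul]
  refine Finset.sum_le_sum fun j _ => ?_
  calc x i * (W i j * x j) ≤ |W i j| * |x i * x j| := by
        rw [← abs_mul]; exact le_of_eq_of_le (by ring) (le_abs_self _)
    _ ≤ |W i j| * (x ⬝ᵥ x) := mul_le_mul_of_nonneg_left (hprod i j) (abs_nonneg _)

theorem exists_dotProduct_mulVec_le_of_continuousOn {W : ℝ → Matrix ι ι ℝ} {s : Set ℝ}
    (hs : IsCompact s) (hW : ContinuousOn W s) :
    ∃ K, ∀ τ ∈ s, ∀ x, x ⬝ᵥ W τ *ᵥ x ≤ K * (x ⬝ᵥ x) := by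
  have hcont : ContinuousOn (fun τ => ∑ i, ∑ j, |W τ i j|) s :=
    continuousOn_finsetSum _ fun i _ => continuousOn_finsetSum _ fun j _ =>
      ((continuous_apply_apply i j).comp_continuousOn hW).abs
  obtain ⟨K, hK⟩ := hs.exists_bound_of_continuousOn hcont
  refine ⟨K, fun τ hτ x => (dotProduct_mulVec_le_sum_abs_mul (W τ) x).trans ?_⟩
  exact mul_le_mul_of_nonneg_right ((le_abs_self _).trans (hK τ hτ))
    (Finset.sum_nonneg fun i _ => mul_self_nonneg (x i))

theorem exists_mem_sphere_dotProduct_mulVec_nonpos {M : Matrix ι ι ℝ} {x : ι → ℝ} (hx : x ≠ 0)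
    (hMx : x ⬝ᵥ M *ᵥ x ≤ 0) : ∃ y ∈ Metric.sphere (0 : ι → ℝ) 1, y ⬝ᵥ M *ᵥ y ≤ 0 := by
  refine ⟨‖x‖⁻¹ • x, by simpa using norm_smul_inv_norm (𝕜 := ℝ) hx, ?_⟩
  rw [Matrix.mulVec_smul, dotProduct_smul, smul_dotProduct, smul_eq_mul, smul_eq_mul,
    ← mul_assoc]
  exact mul_nonpos_of_nonneg_of_nonpos (by positivity) hMx

theorem posSemidef_of_forall_posSemidef_add_smul_one [DecidableEq ι] {M : Matrix ι ι ℝ}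
    (hM : M.IsHermitian) (hpert : ∀ δ : ℝ, 0 < δ → (M + δ • 1).PosSemidef) : M.PosSemidef := by
  refine .of_dotProduct_mulVec_nonneg hM fun x => ?_
  have hδ : ∀ δ : ℝ, 0 < δ → 0 ≤ x ⬝ᵥ M *ᵥ x + δ * (x ⬝ᵥ x) := fun δ hδ => by
    simpa [Matrix.add_mulVec, Matrix.smul_mulVec] using (hpert δ hδ).dotProduct_mulVec_nonneg x
  have hlim : Tendsto (fun δ : ℝ => x ⬝ᵥ M *ᵥ x + δ * (x ⬝ᵥ x)) (𝓝[>] 0)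
      (𝓝 (x ⬝ᵥ M *ᵥ x)) :=
    tendsto_nhdsWithin_of_tendsto_nhds
      ((continuous_const.add (continuous_id.mul continuous_const)).tendsto' 0 _ (by simp))
  simpa using ge_of_tendsto hlim (eventually_nhdsWithin_of_forall hδ)

end Matrix

theorem HasDerivAt.nonneg_of_forall_Ioc_le {g : ℝ → ℝ} {d t₀ b : ℝ} (hg : HasDerivAt g d t₀)
    (hlt : t₀ < b) (hright : ∀ s ∈ Ioc t₀ b, g t₀ ≤ g s) : 0 ≤ d := by
  have hslope : Tendsto (slope g t₀) (𝓝[>] t₀) (𝓝 d) :=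
    hg.tendsto_slope.mono_left (nhdsWithin_mono _ fun s hs => ne_of_gt hs)
  refine ge_of_tendsto hslope ?_
  filter_upwards [Ioc_mem_nhdsGT hlt] with s hs
  rw [slope_def_field]
  exact div_nonneg (sub_nonneg.2 (hright s hs)) (sub_nonneg.2 hs.1.le)

section Barrier

variable {ι : Type*} [Fintype ι] {Γ Γ' : ℝ → Matrix ι ι ℝ} {a b : ℝ}

theorem exists_last_not_posDef (hΓ : ContinuousOn Γ (Icc a b))
    (hsymm : ∀ s ∈ Icc a b, (Γ s).IsHermitian) {s₀ : ℝ} (hs₀ : s₀ ∈ Icc a b)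
    (hbad : ¬ (Γ s₀).PosDef) :
    ∃ t₀ ∈ Icc a b, (∃ x ≠ 0, x ⬝ᵥ Γ t₀ *ᵥ x ≤ 0) ∧ ∀ s ∈ Ioc t₀ b, (Γ s).PosDef := by
  set q : ℝ × (ι → ℝ) → ℝ := fun p => p.2 ⬝ᵥ Γ p.1 *ᵥ p.2
  set Z := Icc a b ×ˢ Metric.sphere (0 : ι → ℝ) 1
  have hZ : IsCompact Z := isCompact_Icc.prod (isCompact_sphere 0 1)
  have hq : ContinuousOn q Z :=
    (continuous_snd.dotProduct (continuous_fst.matrix_mulVec continuous_snd)).comp_continuousOn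
      ((hΓ.comp continuousOn_fst fun p hp => hp.1).prodMk continuousOn_snd)
  have hZbad : IsCompact (Z ∩ q ⁻¹' Iic 0) :=
    hZ.of_isClosed_subset (hq.preimage_isClosed_of_isClosed hZ.isClosed isClosed_Iic)
      inter_subset_left
  have hnonpos : ∀ s ∈ Icc a b, ¬ (Γ s).PosDef →
      ∃ y ∈ Metric.sphere (0 : ι → ℝ) 1, y ⬝ᵥ Γ s *ᵥ y ≤ 0 := fun s hs hnot => by
    rw [Matrix.posDef_iff_dotProduct_mulVec] at hnot
    push Not at hnot
    obtain ⟨x, hx, hqx⟩ := hnot (hsymm s hs)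
    exact exists_mem_sphere_dotProduct_mulVec_nonpos hx (by simpa using hqx)
  obtain ⟨y₀, hy₀, hqy₀⟩ := hnonpos s₀ hs₀ hbad
  obtain ⟨⟨t₀, x⟩, ⟨⟨ht₀, hx⟩, hqx⟩, hmax⟩ :=
    hZbad.exists_isMaxOn ⟨(s₀, y₀), ⟨hs₀, hy₀⟩, hqy₀⟩ continuousOn_fst
  refine ⟨t₀, ht₀, ⟨x, ne_zero_of_mem_sphere one_ne_zero ⟨x, hx⟩, hqx⟩, fun s hs => ?_⟩
  by_contra hnot
  obtain ⟨y, hy, hqy⟩ := hnonpos s ⟨ht₀.1.trans hs.1.le, hs.2⟩ hnot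
  have hle : s ≤ t₀ := hmax (a := (s, y)) ⟨⟨⟨ht₀.1.trans hs.1.le, hs.2⟩, hy⟩, hqy⟩
  exact hle.not_gt hs.1

theorem posSemidef_of_forall_Ioc_posDef {t₀ : ℝ} (hΓ : ContinuousAt Γ t₀)
    (hsymm : (Γ t₀).IsHermitian) (hlt : t₀ < b) (hright : ∀ s ∈ Ioc t₀ b, (Γ s).PosDef) :
    (Γ t₀).PosSemidef := by
  refine .of_dotProduct_mulVec_nonneg hsymm fun x => ?_
  have hq : Tendsto (fun s => star x ⬝ᵥ Γ s *ᵥ x) (𝓝[>] t₀) (𝓝 (star x ⬝ᵥ Γ t₀ *ᵥ x)) :=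
    ((continuous_const.dotProduct (continuous_id.matrix_mulVec continuous_const)).continuousAt.comp
      hΓ).tendsto.mono_left nhdsWithin_le_nhds
  refine ge_of_tendsto hq ?_
  filter_upwards [Ioc_mem_nhdsGT hlt] with s hs
  exact ((hright s hs).posSemidef).dotProduct_mulVec_nonneg x

theorem posDef_of_hasMatrixDerivAt_of_deriv_neg_on_ker
    (hΓ : ∀ s ∈ Icc a b, HasMatrixDerivAt Γ (Γ' s) s)
    (hsymm : ∀ s ∈ Icc a b, (Γ s).IsHermitian) (hb : (Γ b).PosDef)
    (hΓ' : ∀ s ∈ Ico a b, ∀ x ≠ 0, Γ s *ᵥ x = 0 → x ⬝ᵥ Γ' s *ᵥ x < 0) :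
    ∀ s ∈ Icc a b, (Γ s).PosDef := by
  intro s₀ hs₀
  by_contra hbad
  obtain ⟨t₀, ht₀, ⟨x, hx, hqx⟩, hright⟩ := exists_last_not_posDef
    (continuousOn_of_forall_continuousAt fun s hs => (hΓ s hs).continuousAt) hsymm hs₀ hbad
  have hpos : ∀ {s}, (Γ s).PosDef → 0 < x ⬝ᵥ Γ s *ᵥ x := fun h => by
    simpa using h.dotProduct_mulVec_pos hx
  have hlt : t₀ < b := ht₀.2.lt_of_ne fun h => (hpos (h ▸ hb)).not_ge hqx
  have hpsd := posSemidef_of_forall_Ioc_posDef (hΓ t₀ ht₀).continuousAt (hsymm t₀ ht₀) hlt hright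
  have hq0 : x ⬝ᵥ Γ t₀ *ᵥ x = 0 := hqx.antisymm (by simpa using hpsd.dotProduct_mulVec_nonneg x)
  have hker : Γ t₀ *ᵥ x = 0 := (hpsd.dotProduct_mulVec_zero_iff x).1 (by simpa using hq0)
  have hderiv : 0 ≤ x ⬝ᵥ Γ' t₀ *ᵥ x :=
    ((hΓ t₀ ht₀).dotProduct_mulVec x x).nonneg_of_forall_Ioc_le hlt fun s hs =>
      hq0 ▸ (hpos (hright s hs)).le
  exact (hΓ' t₀ ⟨ht₀.1, hlt⟩ x hx hker).not_ge hderiv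

end Barrier

section Sylvester

variable {ι : Type*} [Fintype ι]

theorem dotProduct_sylvester_mulVec_of_mulVec_eq_smul {Δ N₁ N₂ : Matrix ι ι ℝ}
    (hΔ : Δ.IsHermitian) {x : ι → ℝ} {μ : ℝ} (hx : Δ *ᵥ x = μ • x) :
    x ⬝ᵥ (N₁ * Δ + Δ * N₂) *ᵥ x = μ * (x ⬝ᵥ (N₁ + N₂) *ᵥ x) := by
  have hxΔ : x ᵥ* Δ = μ • x := by
    rw [← mulVec_transpose, ← conjTranspose_eq_transpose_of_trivial, hΔ.eq, hx]
  rw [add_mulVec, ← mulVec_mulVec, ← mulVec_mulVec, hx, mulVec_smul, dotProduct_add,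
    dotProduct_mulVec x Δ, hxΔ, add_mulVec, dotProduct_add, dotProduct_smul, smul_dotProduct,
    smul_eq_mul, smul_eq_mul, mul_add]

variable [DecidableEq ι] {Δ N₁ N₂ : ℝ → Matrix ι ι ℝ} {a b : ℝ}

theorem posSemidef_of_hasMatrixDerivAt_sylvester
    (hΔ : ∀ s ∈ Icc a b, HasMatrixDerivAt Δ (-(N₁ s * Δ s + Δ s * N₂ s)) s)
    (hN : ContinuousOn (fun s => N₁ s + N₂ s) (Icc a b))
    (hsymm : ∀ s ∈ Icc a b, (Δ s).IsHermitian) (hb : (Δ b).PosSemidef) :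
    ∀ s ∈ Icc a b, (Δ s).PosSemidef := by
  obtain ⟨K, hK⟩ := exists_dotProduct_mulVec_le_of_continuousOn isCompact_Icc hN
  set w : ℝ → ℝ := fun s => Real.exp ((K + 1) * (b - s))
  have hw : ∀ s, HasDerivAt w (-(K + 1) * w s) s := fun s => by
    simpa [w, mul_comm] using (((hasDerivAt_id s).const_sub b).const_mul (K + 1)).exp
  have hpert : ∀ ε : ℝ, 0 < ε → ∀ s ∈ Icc a b, (Δ s + (ε * w s) • 1).PosDef := by
    intro ε hε
    refine posDef_of_hasMatrixDerivAt_of_deriv_neg_on_ker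
      (Γ' := fun s => -(N₁ s * Δ s + Δ s * N₂ s) + (ε * (-(K + 1) * w s)) • 1)
      (fun s hs => (hΔ s hs).add (((hw s).const_mul ε).smul_hasMatrixDerivAt 1))
      (fun s hs => (hsymm s hs).add (isHermitian_one.smul (IsSelfAdjoint.all _)))
      (by simpa [w] using PosDef.posSemidef_add hb (PosDef.one.smul hε)) ?_
    -- on a null vector `x`, `Δ s x = -ε w x`, and the derivative of `xᵀ (Δ + ε w I) x` is
    -- `ε w (xᵀ (N₁ + N₂) x - (K + 1) xᵀ x) < 0`
    intro s hs x hx hker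
    have hΔx : Δ s *ᵥ x = (-(ε * w s)) • x := by
      rw [add_mulVec, smul_mulVec, one_mulVec] at hker
      rw [neg_smul, eq_neg_iff_add_eq_zero, hker]
    have hxx : 0 < x ⬝ᵥ x :=
      lt_of_le_of_ne (Fintype.sum_nonneg fun i => mul_self_nonneg (x i))
        (Ne.symm (mt dotProduct_self_eq_zero.1 hx))
    have hεw : 0 < ε * w s := mul_pos hε (Real.exp_pos _)
    rw [add_mulVec, dotProduct_add, neg_mulVec, dotProduct_neg,
      dotProduct_sylvester_mulVec_of_mulVec_eq_smul (hsymm s (Ico_subset_Icc_self hs)) hΔx,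
      smul_mulVec, one_mulVec, dotProduct_smul, smul_eq_mul]
    nlinarith [mul_le_mul_of_nonneg_left (hK s (Ico_subset_Icc_self hs) x) hεw.le]
  intro s hs
  refine posSemidef_of_forall_posSemidef_add_smul_one (hsymm s hs) fun δ hδ => ?_
  have hws : 0 < w s := Real.exp_pos _
  simpa [div_mul_cancel₀ δ hws.ne'] using (hpert (δ / w s) (by positivity) s hs).posSemidef

end Sylvester

section Uniqueness

open scoped MatrixOrder

variable {m n : Type*} [Fintype m] [Fintype n] [DecidableEq m] [DecidableEq n]
  {E : ℝ → Matrix m n ℝ} {N₁ : ℝ → Matrix m m ℝ} {N₂ : ℝ → Matrix n n ℝ} {a b : ℝ}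

/-- The symmetric dilation `[[0, E], [Eᵀ, 0]]` of `E` satisfies an equation of the same form, so
comparison applied to it and to its negative forces it to vanish. -/
theorem eq_zero_of_hasMatrixDerivAt_sylvester
    (hE : ∀ s ∈ Icc a b, HasMatrixDerivAt E (-(N₁ s * E s + E s * N₂ s)) s)
    (hN₁ : ContinuousOn N₁ (Icc a b)) (hN₂ : ContinuousOn N₂ (Icc a b)) (hb : E b = 0) :
    ∀ s ∈ Icc a b, E s = 0 := by
  set Γ : ℝ → Matrix (m ⊕ n) (m ⊕ n) ℝ := fun s => fromBlocks 0 (E s) (E s)ᵀ 0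
  set M₁ : ℝ → Matrix (m ⊕ n) (m ⊕ n) ℝ := fun s => fromBlocks (N₁ s) 0 0 (N₂ s)ᵀ
  set M₂ : ℝ → Matrix (m ⊕ n) (m ⊕ n) ℝ := fun s => fromBlocks (N₁ s)ᵀ 0 0 (N₂ s)
  have hΓ : ∀ s ∈ Icc a b, HasMatrixDerivAt Γ (-(M₁ s * Γ s + Γ s * M₂ s)) s := fun s hs => by
    convert (hasMatrixDerivAt_const 0).fromBlocks (hE s hs) (hE s hs).transpose
      (hasMatrixDerivAt_const 0) using 1
    simp [Γ, M₁, M₂, fromBlocks_multiply, fromBlocks_add, fromBlocks_neg, transpose_mul, add_comm]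
  have hnegΓ : ∀ s ∈ Icc a b,
      HasMatrixDerivAt (fun s => -Γ s) (-(M₁ s * -Γ s + -Γ s * M₂ s)) s := fun s hs => by
    simpa only [mul_neg, neg_mul, neg_add] using (hΓ s hs).neg
  have hM : ContinuousOn (fun s => M₁ s + M₂ s) (Icc a b) := by
    have hblocks : Continuous fun p : Matrix m m ℝ × Matrix n n ℝ => fromBlocks p.1 0 0 p.2 :=
      continuous_fst.matrix_fromBlocks continuous_const continuous_const continuous_snd
    refine (hblocks.comp_continuousOn
      ((hN₁.add (continuous_id.matrix_transpose.comp_continuousOn hN₁)).prodMk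
        ((continuous_id.matrix_transpose.comp_continuousOn hN₂).add hN₂))).congr fun s _ => ?_
    simp [M₁, M₂, fromBlocks_add]
  have hsymm : ∀ s, (Γ s).IsHermitian := fun s =>
    isHermitian_zero.fromBlocks (conjTranspose_eq_transpose_of_trivial _) isHermitian_zero
  have hΓb : Γ b = 0 := by simp [Γ, hb]
  have hnonneg := posSemidef_of_hasMatrixDerivAt_sylvester hΓ hM (fun s _ => hsymm s)
    (by rw [hΓb]; exact .zero)
  have hnonpos := posSemidef_of_hasMatrixDerivAt_sylvester hnegΓ hM (fun s _ => (hsymm s).neg)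
    (by rw [hΓb, neg_zero]; exact .zero)
  intro s hs
  have hΓs : Γ s = 0 :=
    le_antisymm (by rw [le_iff, zero_sub]; exact hnonpos s hs) (hnonneg s hs).nonneg
  exact (fromBlocks_inj.1 (hΓs.trans fromBlocks_zero.symm)).2.1

end Uniqueness

section Riccati

variable {n m r : ℕ} {A : ℝ → Matrix (Fin n) (Fin n) ℝ} {B : ℝ → Matrix (Fin n) (Fin m) ℝ}
  {C : ℝ → Matrix (Fin r) (Fin n) ℝ} {R : ℝ → Matrix (Fin m) (Fin m) ℝ}
  {P P₁ P₂ : ℝ → Matrix (Fin n) (Fin n) ℝ} {S : Set ℝ} {tf : ℝ}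

noncomputable def riccatiQuadCoeff (B : ℝ → Matrix (Fin n) (Fin m) ℝ)
    (R : ℝ → Matrix (Fin m) (Fin m) ℝ) (t : ℝ) : Matrix (Fin n) (Fin n) ℝ :=
  B t * (R t)⁻¹ * (B t)ᵀ

noncomputable def riccatiField (A : ℝ → Matrix (Fin n) (Fin n) ℝ)
    (B : ℝ → Matrix (Fin n) (Fin m) ℝ) (C : ℝ → Matrix (Fin r) (Fin n) ℝ)
    (R : ℝ → Matrix (Fin m) (Fin m) ℝ) (t : ℝ) (X : Matrix (Fin n) (Fin n) ℝ) :
    Matrix (Fin n) (Fin n) ℝ :=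
  -((A t)ᵀ * X + X * A t - X * riccatiQuadCoeff B R t * X + (C t)ᵀ * C t)

theorem continuous_riccatiQuadCoeff (hB : Continuous B) (hR : Continuous R)
    (hRdet : ∀ t, (R t).det ≠ 0) : Continuous (riccatiQuadCoeff B R) := by
  have hinv : ∀ t, ContinuousAt Inv.inv (R t) := fun t =>
    continuousAt_matrix_inv _ (by rw [Ring.inverse_eq_inv']; exact continuousAt_inv₀ (hRdet t))
  exact (hB.matrix_mul (continuous_iff_continuousAt.2 fun t => (hinv t).comp hR.continuousAt))
    |>.matrix_mul hB.matrix_transpose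

theorem riccatiQuadCoeff_transpose (hRsymm : ∀ t, (R t)ᵀ = R t) (t : ℝ) :
    (riccatiQuadCoeff B R t)ᵀ = riccatiQuadCoeff B R t := by
  simp [riccatiQuadCoeff, transpose_nonsing_inv, hRsymm, Matrix.mul_assoc]

theorem riccatiField_transpose (hRsymm : ∀ t, (R t)ᵀ = R t) (t : ℝ)
    (X : Matrix (Fin n) (Fin n) ℝ) :
    riccatiField A B C R t Xᵀ = (riccatiField A B C R t X)ᵀ := by
  simp only [riccatiField, transpose_neg, transpose_add, transpose_sub, transpose_mul,
    transpose_transpose, riccatiQuadCoeff_transpose hRsymm, Matrix.mul_assoc]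
  abel

theorem riccatiField_sub (t : ℝ) (X₁ X₂ : Matrix (Fin n) (Fin n) ℝ) :
    riccatiField A B C R t X₂ - riccatiField A B C R t X₁ =
      -(((A t)ᵀ - X₂ * riccatiQuadCoeff B R t) * (X₂ - X₁)
        + (X₂ - X₁) * (A t - riccatiQuadCoeff B R t * X₁)) := by
  simp only [riccatiField]
  noncomm_ring

theorem isPRESolOn_iff : IsPRESolOn A B C R P S ↔
    ∀ t ∈ S, HasMatrixDerivAt P (riccatiField A B C R t (P t)) t := by
  have hquad : ∀ t, P t * B t * (R t)⁻¹ * (B t)ᵀ * P t = P t * riccatiQuadCoeff B R t * P t :=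
    fun t => by simp only [riccatiQuadCoeff, Matrix.mul_assoc]
  simp only [IsPRESolOn, HasMatrixDerivAt, riccatiField, hquad]

namespace IsPRESolOn

theorem continuousOn (hP : IsPRESolOn A B C R P S) : ContinuousOn P S :=
  continuousOn_of_forall_continuousAt fun t ht => (isPRESolOn_iff.1 hP t ht).continuousAt

theorem sub (hP₁ : IsPRESolOn A B C R P₁ S) (hP₂ : IsPRESolOn A B C R P₂ S) :
    ∀ t ∈ S, HasMatrixDerivAt (fun τ => P₂ τ - P₁ τ)
      (-(((A t)ᵀ - P₂ t * riccatiQuadCoeff B R t) * (P₂ t - P₁ t)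
        + (P₂ t - P₁ t) * (A t - riccatiQuadCoeff B R t * P₁ t))) t := fun t ht =>
  riccatiField_sub (A := A) (C := C) t (P₁ t) (P₂ t) ▸
    (isPRESolOn_iff.1 hP₂ t ht).sub (isPRESolOn_iff.1 hP₁ t ht)

theorem transpose (hRsymm : ∀ t, (R t)ᵀ = R t) (hP : IsPRESolOn A B C R P S) :
    IsPRESolOn A B C R (fun t => (P t)ᵀ) S :=
  isPRESolOn_iff.2 fun t ht =>
    riccatiField_transpose hRsymm t (P t) ▸ (isPRESolOn_iff.1 hP t ht).transpose

theorem isHermitian (hA : Continuous A) (hQ : Continuous (riccatiQuadCoeff B R))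
    (hRsymm : ∀ t, (R t)ᵀ = R t) (hP : IsPRESolOn A B C R P (Iic tf))
    (hPf : (P tf).IsHermitian) : ∀ t ≤ tf, (P t).IsHermitian := by
  intro t ht
  have hPc : ContinuousOn P (Icc t tf) := hP.continuousOn.mono Icc_subset_Iic_self
  have hE := eq_zero_of_hasMatrixDerivAt_sylvester
    (fun s hs => hP.sub (hP.transpose hRsymm) s hs.2)
    (hA.matrix_transpose.continuousOn.sub
      ((continuous_id.matrix_transpose.comp_continuousOn hPc).mul hQ.continuousOn))
    (hA.continuousOn.sub (hQ.continuousOn.mul hPc))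
    (sub_eq_zero.2 (isHermitian_iff_isSymm.1 hPf)) t ⟨le_rfl, ht⟩
  exact isHermitian_iff_isSymm.2 (sub_eq_zero.1 hE)

end IsPRESolOn

end Riccati

theorem PRE_sol_mono_in_terminal_condition_general
    {n m r : ℕ}
    (A : ℝ → Matrix (Fin n) (Fin n) ℝ) (B : ℝ → Matrix (Fin n) (Fin m) ℝ)
    (C : ℝ → Matrix (Fin r) (Fin n) ℝ) (R : ℝ → Matrix (Fin m) (Fin m) ℝ)
    (hA : Continuous A) (hB : Continuous B) (hR : Continuous R)
    (hRpos : ∀ t, (R t).PosDef)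
    (tf : ℝ) (G₁ G₂ : Matrix (Fin n) (Fin n) ℝ)
    (hG₁ : G₁.PosSemidef) (hG₂ : G₂.PosSemidef) (hG : (G₂ - G₁).PosSemidef)
    (P₁ P₂ : ℝ → Matrix (Fin n) (Fin n) ℝ)
    (hP₁ : IsPRESolOn A B C R P₁ (Set.Iic tf)) (hP₁f : P₁ tf = G₁)
    (hP₂ : IsPRESolOn A B C R P₂ (Set.Iic tf)) (hP₂f : P₂ tf = G₂)
    (t : ℝ) (ht : t ≤ tf) :
    (P₂ t - P₁ t).PosSemidef := by
  have hRsymm : ∀ t, (R t)ᵀ = R t := fun t => isHermitian_iff_isSymm.1 (hRpos t).isHermitian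
  have hQ := continuous_riccatiQuadCoeff hB hR fun t => (hRpos t).det_pos.ne'
  have hsymm₁ := hP₁.isHermitian hA hQ hRsymm (hP₁f ▸ hG₁.isHermitian)
  have hsymm₂ := hP₂.isHermitian hA hQ hRsymm (hP₂f ▸ hG₂.isHermitian)
  have hP₁c : ContinuousOn P₁ (Icc t tf) := hP₁.continuousOn.mono Icc_subset_Iic_self
  have hP₂c : ContinuousOn P₂ (Icc t tf) := hP₂.continuousOn.mono Icc_subset_Iic_self
  refine posSemidef_of_hasMatrixDerivAt_sylvester (fun s hs => hP₁.sub hP₂ s hs.2)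
    ((hA.matrix_transpose.continuousOn.sub (hP₂c.mul hQ.continuousOn)).add
      (hA.continuousOn.sub (hQ.continuousOn.mul hP₁c)))
    (fun s hs => (hsymm₂ s hs.2).sub (hsymm₁ s hs.2)) (by rwa [hP₁f, hP₂f]) t ⟨le_rfl, ht⟩

/-- Paper's Lemma 3: monotonicity of backward PRE solutions in the terminal condition.
If `0 ≤ G₁ ≤ G₂` (Loewner) and `Pᵢ` solves the PRE on `(−∞, t_f]` with `Pᵢ(t_f) = Gᵢ`,
then `P₁(t) ≤ P₂(t)` for all `t ≤ t_f`. -/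
theorem PRE_sol_mono_in_terminal_condition
    {n m r : ℕ} (T : ℝ) (hT : 0 < T)
    (A : ℝ → Matrix (Fin n) (Fin n) ℝ) (B : ℝ → Matrix (Fin n) (Fin m) ℝ)
    (C : ℝ → Matrix (Fin r) (Fin n) ℝ) (R : ℝ → Matrix (Fin m) (Fin m) ℝ)
    (hA : Continuous A) (hB : Continuous B) (hC : Continuous C) (hR : Continuous R)
    (hAper : ∀ t, A (t + T) = A t) (hBper : ∀ t, B (t + T) = B t)
    (hCper : ∀ t, C (t + T) = C t) (hRper : ∀ t, R (t + T) = R t)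
    (hRpos : ∀ t, (R t).PosDef)
    (tf : ℝ) (G₁ G₂ : Matrix (Fin n) (Fin n) ℝ)
    (hG₁ : G₁.PosSemidef) (hG₂ : G₂.PosSemidef) (hG : (G₂ - G₁).PosSemidef)
    (P₁ P₂ : ℝ → Matrix (Fin n) (Fin n) ℝ)
    (hP₁ : IsPRESolOn A B C R P₁ (Set.Iic tf)) (hP₁f : P₁ tf = G₁)
    (hP₂ : IsPRESolOn A B C R P₂ (Set.Iic tf)) (hP₂f : P₂ tf = G₂)
    (t : ℝ) (ht : t ≤ tf) :
    (P₂ t - P₁ t).PosSemidef :=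
  PRE_sol_mono_in_terminal_condition_general A B C R hA hB hR hRpos tf G₁ G₂ hG₁ hG₂ hG P₁ P₂ hP₁
    hP₁f hP₂ hP₂f t ht
end

section
/- Let P* be a solution of the PRE on all of ℝ such that P*(t) is symmetric positive semidefinite for every t, and let P be a solution of the PRE on (−∞, τ] with P(τ) = 0. Then P(t) ≤ P*(t) in the Loewner order for all t ≤ τ. (Claim from Case 2 of the proof of Theorem 1: P(t; τ, 0) ≤ P*(t).) -/
open Matrix Filter Topology

/-!
`Pᵀ` solves the same Riccati equation as `P` with the same terminal value, and the Riccati field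
is locally Lipschitz, so `P` is symmetric. With `S = B R⁻¹ Bᵀ` the difference `Δ = P* − P`
satisfies `Δ' = −(AᵀΔ + ΔA) + Δ S P* + P S Δ`, hence `yᵀ Δ' y = λ yᵀ (Aᵀ + A − S P* − P S) y`
whenever `Δ y = −λ y`. Going backwards from `Δ(τ) = P*(τ) ≥ 0`, the matrices
`Δ(u) + δ e^{K(t−u)} I`, with `K` larger than the size of `Aᵀ + A − S P* − P S` on `[t, τ]`, stay
positive semidefinite: at the last time they acquire a kernel vector `y`, the form `yᵀ (·) y`
vanishes and is nonnegative afterwards, yet its derivative is negative. Let `δ → 0`.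
-/

open Set
open scoped Matrix.Norms.Elementwise

section

variable {ι : Type*} [Fintype ι]

theorem Matrix.norm_mul_le_card_mul {l m n : Type*} [Fintype l] [Fintype m] [Fintype n]
    (X : Matrix l m ℝ) (Y : Matrix m n ℝ) : ‖X * Y‖ ≤ Fintype.card m * ‖X‖ * ‖Y‖ := by
  refine (norm_le_iff (by positivity)).2 fun i j => ?_
  calc ‖(X * Y) i j‖ ≤ ∑ k, ‖X i k‖ * ‖Y k j‖ := by
        rw [mul_apply]; exact (norm_sum_le _ _).trans (Finset.sum_le_sum fun k _ => norm_mul_le _ _)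
    _ ≤ ∑ _k : m, ‖X‖ * ‖Y‖ := by
        gcongr <;> exact norm_entry_le_entrywise_sup_norm _
    _ = _ := by simp [mul_assoc]

theorem abs_dotProduct_le (x y : ι → ℝ) : |x ⬝ᵥ y| ≤ Fintype.card ι * ‖x‖ * ‖y‖ := by
  calc |x ⬝ᵥ y| ≤ ∑ i, ‖x i‖ * ‖y i‖ := by
        rw [dotProduct]; exact (Finset.abs_sum_le_sum_abs _ _).trans (by simp [abs_mul])
    _ ≤ ∑ _i : ι, ‖x‖ * ‖y‖ := by gcongr <;> exact norm_le_pi_norm _ _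
    _ = _ := by simp [mul_assoc]

theorem Matrix.norm_mulVec_le_card_mul (M : Matrix ι ι ℝ) (y : ι → ℝ) :
    ‖M *ᵥ y‖ ≤ Fintype.card ι * ‖M‖ * ‖y‖ := by
  refine (pi_norm_le_iff_of_nonneg (by positivity)).2 fun i => ?_
  have hrow : ‖fun j => M i j‖ ≤ ‖M‖ := norm_le_pi_norm (M : ι → ι → ℝ) i
  rw [Real.norm_eq_abs, mulVec]
  exact (abs_dotProduct_le _ _).trans (by gcongr)

theorem abs_dotProduct_mulVec_le (M : Matrix ι ι ℝ) (y : ι → ℝ) :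
    |y ⬝ᵥ M *ᵥ y| ≤ Fintype.card ι ^ 2 * ‖M‖ * ‖y‖ ^ 2 := by
  calc |y ⬝ᵥ M *ᵥ y| ≤ Fintype.card ι * ‖y‖ * (Fintype.card ι * ‖M‖ * ‖y‖) := by
        refine (abs_dotProduct_le _ _).trans ?_
        gcongr
        exact norm_mulVec_le_card_mul M y
    _ = _ := by ring

theorem sq_norm_le_dotProduct_self (y : ι → ℝ) : ‖y‖ ^ 2 ≤ y ⬝ᵥ y := by
  have : ‖y‖ ≤ √(y ⬝ᵥ y) := (pi_norm_le_iff_of_nonneg (Real.sqrt_nonneg _)).2 fun i =>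
    Real.abs_le_sqrt <| (sq (y i)).trans_le <| Finset.single_le_sum (f := fun j => y j * y j)
      (fun j _ => mul_self_nonneg _) (Finset.mem_univ i)
  calc ‖y‖ ^ 2 ≤ √(y ⬝ᵥ y) ^ 2 := by gcongr
    _ = y ⬝ᵥ y := Real.sq_sqrt (dotProduct_self_star_nonneg y)

theorem exists_pos_mul_sq_norm_le_dotProduct_mulVec {M : Matrix ι ι ℝ}
    (hM : ∀ y ≠ 0, 0 < y ⬝ᵥ M *ᵥ y) : ∃ c > 0, ∀ y, c * ‖y‖ ^ 2 ≤ y ⬝ᵥ M *ᵥ y := by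
  have hq : Continuous fun y : ι → ℝ => y ⬝ᵥ M *ᵥ y :=
    continuous_id.dotProduct (continuous_const.matrix_mulVec continuous_id)
  obtain ⟨c, hc, hcq⟩ : ∃ c > 0, ∀ u ∈ Metric.sphere (0 : ι → ℝ) 1, c ≤ u ⬝ᵥ M *ᵥ u := by
    rcases (Metric.sphere (0 : ι → ℝ) 1).eq_empty_or_nonempty with h | h
    · exact ⟨1, one_pos, by simp [h]⟩
    obtain ⟨u₀, hu₀, hmin⟩ := (isCompact_sphere _ _).exists_isMinOn h hq.continuousOn
    refine ⟨_, hM u₀ (ne_zero_of_mem_sphere one_ne_zero ⟨u₀, hu₀⟩), fun u hu => hmin hu⟩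
  refine ⟨c, hc, fun y => ?_⟩
  rcases eq_or_ne y 0 with rfl | hy
  · simp
  have hny : 0 < ‖y‖ := norm_pos_iff.2 hy
  have hu : ‖y‖⁻¹ • y ∈ Metric.sphere (0 : ι → ℝ) 1 := by
    simp [norm_smul, hny.ne']
  have := hcq _ hu
  simp only [mulVec_smul, dotProduct_smul, smul_dotProduct, smul_eq_mul] at this
  calc c * ‖y‖ ^ 2 ≤ (‖y‖⁻¹ * (‖y‖⁻¹ * (y ⬝ᵥ M *ᵥ y))) * ‖y‖ ^ 2 := by gcongr
    _ = y ⬝ᵥ M *ᵥ y := by field_simp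

theorem eventually_forall_pos_dotProduct_mulVec {W : ℝ → Matrix ι ι ℝ} {s : Set ℝ} {t : ℝ}
    (hW : ContinuousWithinAt W s t) (ht : ∀ y ≠ 0, 0 < y ⬝ᵥ W t *ᵥ y) :
    ∀ᶠ u in 𝓝[s] t, ∀ y ≠ 0, 0 < y ⬝ᵥ W u *ᵥ y := by
  obtain ⟨c, hc, hcW⟩ := exists_pos_mul_sq_norm_le_dotProduct_mulVec ht
  have hlim : Tendsto (fun u => Fintype.card ι ^ 2 * ‖W u - W t‖) (𝓝[s] t) (𝓝 0) := by
    simpa using (tendsto_iff_norm_sub_tendsto_zero.1 hW).const_mul ((Fintype.card ι : ℝ) ^ 2)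
  filter_upwards [hlim.eventually_lt_const hc] with u hu y hy
  have hny : 0 < ‖y‖ ^ 2 := by positivity
  have hdiff := abs_le.1 (abs_dotProduct_mulVec_le (W u - W t) y) |>.1
  have hsplit : y ⬝ᵥ W u *ᵥ y = y ⬝ᵥ W t *ᵥ y + y ⬝ᵥ (W u - W t) *ᵥ y := by
    simp [sub_mulVec]
  nlinarith [hcW y]

theorem Matrix.posSemidef_of_forall_add_smul_one [DecidableEq ι] {M : Matrix ι ι ℝ}
    (hM : M.IsHermitian) (h : ∀ δ : ℝ, 0 < δ → (M + δ • 1).PosSemidef) : M.PosSemidef := by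
  refine PosSemidef.of_dotProduct_mulVec_nonneg hM fun x => ?_
  rw [star_trivial]
  refine le_of_forall_pos_le_add fun ε hε => ?_
  have hx : 0 ≤ x ⬝ᵥ x := dotProduct_self_star_nonneg x
  have hδ : 0 < ε / (x ⬝ᵥ x + 1) := by positivity
  have := (h _ hδ).dotProduct_mulVec_nonneg x
  simp only [star_trivial, add_mulVec, smul_mulVec, one_mulVec, dotProduct_add,
    dotProduct_smul, smul_eq_mul] at this
  have : ε / (x ⬝ᵥ x + 1) * (x ⬝ᵥ x) ≤ ε := by
    rw [div_mul_eq_mul_div, div_le_iff₀ (by positivity)]; nlinarith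
  linarith

theorem HasDerivAt.dotProduct_mulVec {W : ℝ → Matrix ι ι ℝ} {W' : Matrix ι ι ℝ} {t : ℝ}
    (h : HasDerivAt W W' t) (x y : ι → ℝ) :
    HasDerivAt (fun u => x ⬝ᵥ W u *ᵥ y) (x ⬝ᵥ W' *ᵥ y) t := by
  let L : Matrix ι ι ℝ →ₗ[ℝ] ℝ :=
    { toFun := fun M => x ⬝ᵥ M *ᵥ y
      map_add' := fun M N => by simp [add_mulVec]
      map_smul' := fun c M => by simp [smul_mulVec] }
  exact (LinearMap.toContinuousLinearMap L).hasFDerivAt.comp_hasDerivAt t h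

theorem HasDerivAt.matrix_transpose {m n : Type*} [Fintype m] [Fintype n]
    {W : ℝ → Matrix m n ℝ} {W' : Matrix m n ℝ} {t : ℝ}
    (h : HasDerivAt W W' t) : HasDerivAt (fun u => (W u)ᵀ) W'ᵀ t :=
  hasDerivAt_pi.2 fun i => hasDerivAt_pi.2 fun j => hasDerivAt_pi.1 (hasDerivAt_pi.1 h j) i

theorem HasDerivAt.nonneg_of_eventually_ge_right {f : ℝ → ℝ} {f' t : ℝ} (hf : HasDerivAt f f' t)
    (h : ∀ᶠ u in 𝓝[>] t, f t ≤ f u) : 0 ≤ f' := by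
  refine ge_of_tendsto ((hasDerivWithinAt_iff_tendsto_slope' (s := Ioi t) (lt_irrefl t)).1
    hf.hasDerivWithinAt) ?_
  filter_upwards [h, self_mem_nhdsWithin] with u hu (htu : t < u)
  rw [slope_def_field]
  exact div_nonneg (sub_nonneg.2 hu) (sub_nonneg.2 htu.le)

theorem Matrix.PosSemidef.posDef_of_kernel_deriv_neg {W : ℝ → Matrix ι ι ℝ} {W' : Matrix ι ι ℝ}
    {s : ℝ} (hs : (W s).PosSemidef) (hW : HasDerivAt W W' s)
    (hright : ∀ᶠ u in 𝓝[>] s, (W u).PosSemidef)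
    (hker : ∀ y ≠ 0, W s *ᵥ y = 0 → y ⬝ᵥ W' *ᵥ y < 0) : (W s).PosDef := by
  refine PosDef.of_dotProduct_mulVec_pos hs.isHermitian fun y hy => ?_
  by_contra hle
  have hzero : y ⬝ᵥ W s *ᵥ y = 0 :=
    le_antisymm (not_lt.1 hle) (by simpa using hs.dotProduct_mulVec_nonneg y)
  refine (hker y hy ((hs.dotProduct_mulVec_zero_iff y).1 hzero)).not_ge ?_
  refine (hW.dotProduct_mulVec y y).nonneg_of_eventually_ge_right ?_
  filter_upwards [hright] with u hu
  simpa [hzero] using hu.dotProduct_mulVec_nonneg y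

theorem Matrix.posSemidef_of_eventually_posSemidef_right {W : ℝ → Matrix ι ι ℝ} {s : ℝ}
    (hherm : (W s).IsHermitian) (hW : ContinuousWithinAt W (Ioi s) s)
    (hright : ∀ᶠ u in 𝓝[>] s, (W u).PosSemidef) : (W s).PosSemidef := by
  refine PosSemidef.of_dotProduct_mulVec_nonneg hherm fun x => ?_
  have hlim : Tendsto (fun u => star x ⬝ᵥ W u *ᵥ x) (𝓝[>] s) (𝓝 (star x ⬝ᵥ W s *ᵥ x)) :=
    (continuous_const.dotProduct (continuous_id.matrix_mulVec continuous_const)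
      |>.continuousAt.comp_continuousWithinAt hW).tendsto
  exact ge_of_tendsto hlim (hright.mono fun u hu => hu.dotProduct_mulVec_nonneg x)

theorem Matrix.posSemidef_of_kernel_deriv_neg {W W' : ℝ → Matrix ι ι ℝ} {a b : ℝ}
    (hherm : ∀ s ∈ Icc a b, (W s).IsHermitian) (hcont : ContinuousOn W (Icc a b))
    (hderiv : ∀ s ∈ Ico a b, HasDerivAt W (W' s) s) (hb : (W b).PosDef)
    (hker : ∀ s ∈ Ico a b, (W s).PosSemidef → ∀ y ≠ 0, W s *ᵥ y = 0 → y ⬝ᵥ W' s *ᵥ y < 0) :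
    ∀ s ∈ Icc a b, (W s).PosSemidef := by
  intro s hs
  set D := {c ∈ Icc a b | ∀ u ∈ Icc c b, (W u).PosSemidef}
  have hab : a ≤ b := hs.1.trans hs.2
  have hbD : b ∈ D := ⟨⟨hab, le_rfl⟩, fun u hu => le_antisymm hu.2 hu.1 ▸ hb.posSemidef⟩
  have hDbdd : BddBelow D := ⟨a, fun c hc => hc.1.1⟩
  set σ := sInf D
  have hσ : σ ∈ Icc a b := ⟨le_csInf ⟨b, hbD⟩ fun c hc => hc.1.1, csInf_le hDbdd hbD⟩
  have hright : ∀ u ∈ Ioc σ b, (W u).PosSemidef := fun u hu => by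
    obtain ⟨c, hcD, hcu⟩ := exists_lt_of_csInf_lt ⟨b, hbD⟩ hu.1
    exact hcD.2 u ⟨hcu.le, hu.2⟩
  have hσpd : (W σ).PosDef := by
    rcases hσ.2.eq_or_lt with hσb | hσb
    · rwa [hσb]
    have hnhds : Ioc σ b ∈ 𝓝[>] σ := Ioc_mem_nhdsGT hσb
    have hσpsd : (W σ).PosSemidef :=
      posSemidef_of_eventually_posSemidef_right (hherm σ hσ)
        ((hcont σ hσ).mono_of_mem_nhdsWithin
          (mem_of_superset hnhds (Ioc_subset_Icc_self.trans (Icc_subset_Icc_left hσ.1))))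
        (eventually_of_mem hnhds hright)
    exact hσpsd.posDef_of_kernel_deriv_neg (hderiv σ ⟨hσ.1, hσb⟩)
      (eventually_of_mem hnhds hright) (hker σ ⟨hσ.1, hσb⟩ hσpsd)
  -- positive definiteness at `σ` persists slightly to the left of `σ`, against minimality
  have hσa : σ = a := by
    refine le_antisymm ?_ hσ.1
    by_contra! haσ
    have hleft : ∀ᶠ u in 𝓝[≤] σ, ∀ y ≠ 0, 0 < y ⬝ᵥ W u *ᵥ y :=
      eventually_forall_pos_dotProduct_mulVec ((hcont σ hσ).mono_of_mem_nhdsWithin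
        (mem_of_superset (Icc_mem_nhdsLE haσ) (Icc_subset_Icc_right hσ.2)))
        fun y hy => by simpa using hσpd.dotProduct_mulVec_pos hy
    obtain ⟨l, hlσ, hl⟩ := mem_nhdsLE_iff_exists_Icc_subset.1 hleft
    have hD : max a l ∈ D := by
      refine ⟨⟨le_max_left _ _, (max_lt haσ hlσ).le.trans hσ.2⟩, fun u hu => ?_⟩
      rcases le_or_gt u σ with huσ | hσu
      · have hua : u ∈ Icc a b := ⟨(le_max_left _ _).trans hu.1, hu.2⟩
        refine (PosDef.of_dotProduct_mulVec_pos (hherm u hua) fun y hy => ?_).posSemidef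
        simpa using hl ⟨(le_max_right _ _).trans hu.1, huσ⟩ y hy
      · exact hright u ⟨hσu, hu.2⟩
    exact (csInf_le hDbdd hD).not_gt (max_lt haσ hlσ)
  rcases (hσa ▸ hs.1 : σ ≤ s).eq_or_lt with rfl | hσs
  · exact hσpd.posSemidef
  · exact hright s ⟨hσs, hs.2⟩

theorem Continuous.matrix_inv_of_posDef {X : Type*} [TopologicalSpace X] [DecidableEq ι]
    {R : X → Matrix ι ι ℝ} (hR : Continuous R) (hpos : ∀ x, (R x).PosDef) :
    Continuous fun x => (R x)⁻¹ :=
  continuous_iff_continuousAt.2 fun x => (continuousAt_matrix_inv _ (by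
    rw [Ring.inverse_eq_inv']; exact continuousAt_inv₀ (hpos x).det_pos.ne')).comp hR.continuousAt

def riccatiMap (A S Q X : Matrix ι ι ℝ) : Matrix ι ι ℝ :=
  Aᵀ * X + X * A - X * S * X + Q

theorem riccatiMap_sub_riccatiMap (A S Q X Y : Matrix ι ι ℝ) :
    riccatiMap A S Q X - riccatiMap A S Q Y
      = Aᵀ * (X - Y) + (X - Y) * A - (X - Y) * (S * X) - Y * S * (X - Y) := by
  simp only [riccatiMap, Matrix.mul_sub, Matrix.sub_mul, Matrix.mul_assoc]
  abel

theorem transpose_riccatiMap (A S Q X : Matrix ι ι ℝ) :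
    (riccatiMap A S Q X)ᵀ = riccatiMap A Sᵀ Qᵀ Xᵀ := by
  simp only [riccatiMap, transpose_add, transpose_sub, transpose_mul, transpose_transpose,
    Matrix.mul_assoc]
  abel

theorem norm_riccatiMap_sub_le (A S Q X Y : Matrix ι ι ℝ) :
    ‖riccatiMap A S Q X - riccatiMap A S Q Y‖
      ≤ (2 * Fintype.card ι * ‖A‖ + Fintype.card ι ^ 2 * ‖S‖ * (‖X‖ + ‖Y‖)) * ‖X - Y‖ := by
  set k : ℝ := (Fintype.card ι : ℝ)
  have hmul := @norm_mul_le_card_mul ι ι ι _ _ _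
  rw [riccatiMap_sub_riccatiMap]
  calc _ ≤ ‖Aᵀ * (X - Y)‖ + ‖(X - Y) * A‖ + ‖(X - Y) * (S * X)‖ + ‖Y * S * (X - Y)‖ :=
        norm_sub_le_of_le (norm_sub_le_of_le (norm_add_le _ _) le_rfl) le_rfl
    _ ≤ k * ‖A‖ * ‖X - Y‖ + k * ‖X - Y‖ * ‖A‖ + k * ‖X - Y‖ * (k * ‖S‖ * ‖X‖)
        + k * (k * ‖Y‖ * ‖S‖) * ‖X - Y‖ := by
        gcongr
        · exact (hmul _ _).trans_eq (by rw [norm_transpose])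
        · exact hmul _ _
        · exact (hmul _ _).trans (by gcongr; exact hmul _ _)
        · exact (hmul _ _).trans (by gcongr; exact hmul _ _)
    _ = _ := by ring

theorem dotProduct_mul_mulVec_of_mulVec_eq_smul {Δ : Matrix ι ι ℝ} {y : ι → ℝ} {c : ℝ}
    (hΔ : Δ *ᵥ y = c • y) (F : Matrix ι ι ℝ) :
    y ⬝ᵥ (F * Δ) *ᵥ y = c * (y ⬝ᵥ F *ᵥ y) := by
  rw [← mulVec_mulVec, hΔ, mulVec_smul, dotProduct_smul, smul_eq_mul]

theorem dotProduct_mul_mulVec_of_isHermitian_of_mulVec_eq_smul {Δ : Matrix ι ι ℝ} {y : ι → ℝ}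
    {c : ℝ} (hherm : Δ.IsHermitian) (hΔ : Δ *ᵥ y = c • y) (F : Matrix ι ι ℝ) :
    y ⬝ᵥ (Δ * F) *ᵥ y = c * (y ⬝ᵥ F *ᵥ y) := by
  rw [← mulVec_mulVec, dotProduct_mulVec, ← mulVec_transpose,
    (isHermitian_iff_isSymm.1 hherm).eq, hΔ, smul_dotProduct, smul_eq_mul]

theorem dotProduct_riccatiMap_sub_mulVec {A S Q X Y : Matrix ι ι ℝ} {y : ι → ℝ} {c : ℝ}
    (hherm : (X - Y).IsHermitian) (hy : (X - Y) *ᵥ y = c • y) :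
    y ⬝ᵥ (riccatiMap A S Q X - riccatiMap A S Q Y) *ᵥ y
      = c * (y ⬝ᵥ (Aᵀ + A - S * X - Y * S) *ᵥ y) := by
  simp only [riccatiMap_sub_riccatiMap, add_mulVec, sub_mulVec, dotProduct_add, dotProduct_sub,
    dotProduct_mul_mulVec_of_mulVec_eq_smul hy,
    dotProduct_mul_mulVec_of_isHermitian_of_mulVec_eq_smul hherm hy]
  ring

def IsRiccatiSolOn (A S Q P : ℝ → Matrix ι ι ℝ) (s : Set ℝ) : Prop :=
  ∀ t ∈ s, HasDerivAt P (-riccatiMap (A t) (S t) (Q t) (P t)) t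

namespace IsRiccatiSolOn

variable {A S Q P P₁ P₂ : ℝ → Matrix ι ι ℝ} {s : Set ℝ} {a b : ℝ}

theorem mono {s' : Set ℝ} (h : IsRiccatiSolOn A S Q P s) (hs : s' ⊆ s) :
    IsRiccatiSolOn A S Q P s' := fun t ht => h t (hs ht)

theorem continuousOn (h : IsRiccatiSolOn A S Q P s) : ContinuousOn P s :=
  fun t ht => (h t ht).continuousAt.continuousWithinAt

theorem transpose (h : IsRiccatiSolOn A S Q P s) (hS : ∀ t ∈ s, (S t).IsHermitian)
    (hQ : ∀ t ∈ s, (Q t).IsHermitian) : IsRiccatiSolOn A S Q (fun t => (P t)ᵀ) s := by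
  intro t ht
  have := (h t ht).matrix_transpose
  rwa [transpose_neg, transpose_riccatiMap, (isHermitian_iff_isSymm.1 (hS t ht)).eq,
    (isHermitian_iff_isSymm.1 (hQ t ht)).eq] at this

theorem eqOn_Icc (hA : ContinuousOn A (Icc a b)) (hS : ContinuousOn S (Icc a b))
    (h₁ : IsRiccatiSolOn A S Q P₁ (Icc a b)) (h₂ : IsRiccatiSolOn A S Q P₂ (Icc a b))
    (hb : P₁ b = P₂ b) : EqOn P₁ P₂ (Icc a b) := by
  obtain ⟨α, hα⟩ := isCompact_Icc.exists_bound_of_continuousOn hA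
  obtain ⟨β, hβ⟩ := isCompact_Icc.exists_bound_of_continuousOn hS
  obtain ⟨ρ₁, hρ₁⟩ := isCompact_Icc.exists_bound_of_continuousOn h₁.continuousOn
  obtain ⟨ρ₂, hρ₂⟩ := isCompact_Icc.exists_bound_of_continuousOn h₂.continuousOn
  set ρ := max ρ₁ ρ₂
  set k : ℝ := (Fintype.card ι : ℝ)
  have hlip : ∀ t ∈ Ioc a b, LipschitzOnWith (Real.toNNReal (2 * k * α + k ^ 2 * β * (2 * ρ)))
      (fun X => -riccatiMap (A t) (S t) (Q t) X) (Metric.closedBall 0 ρ) := by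
    intro t ht
    refine LipschitzOnWith.of_dist_le' fun X hX Y hY => ?_
    rw [mem_closedBall_zero_iff] at hX hY
    rw [dist_neg_neg, dist_eq_norm, dist_eq_norm]
    refine (norm_riccatiMap_sub_le _ _ _ _ _).trans ?_
    have hAt := hα t (Ioc_subset_Icc_self ht)
    have hSt := hβ t (Ioc_subset_Icc_self ht)
    gcongr
    · exact mul_nonneg (by positivity) ((norm_nonneg _).trans hSt)
    · linarith
  have hball : ∀ P : ℝ → Matrix ι ι ℝ, (∀ x ∈ Icc a b, ‖P x‖ ≤ ρ) →
      ∀ t ∈ Ioc a b, P t ∈ Metric.closedBall 0 ρ := fun P hP t ht =>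
    mem_closedBall_zero_iff.2 (hP t (Ioc_subset_Icc_self ht))
  exact ODE_solution_unique_of_mem_Icc_left hlip h₁.continuousOn
    (fun t ht => (h₁ t (Ioc_subset_Icc_self ht)).hasDerivWithinAt)
    (hball P₁ fun x hx => (hρ₁ x hx).trans (le_max_left _ _)) h₂.continuousOn
    (fun t ht => (h₂ t (Ioc_subset_Icc_self ht)).hasDerivWithinAt)
    (hball P₂ fun x hx => (hρ₂ x hx).trans (le_max_right _ _)) hb

theorem isHermitian (h : IsRiccatiSolOn A S Q P (Icc a b)) (hA : ContinuousOn A (Icc a b))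
    (hScont : ContinuousOn S (Icc a b)) (hS : ∀ t ∈ Icc a b, (S t).IsHermitian)
    (hQ : ∀ t ∈ Icc a b, (Q t).IsHermitian) (hb : (P b).IsHermitian) :
    ∀ t ∈ Icc a b, (P t).IsHermitian := fun _ ht =>
  isHermitian_iff_isSymm.2 <| (h.transpose hS hQ).eqOn_Icc hA hScont h
    (isHermitian_iff_isSymm.1 hb).eq ht

theorem posSemidef_sub_add_smul [DecidableEq ι] {K δ : ℝ} (hδ : 0 < δ) (hab : a ≤ b)
    (h₁ : IsRiccatiSolOn A S Q P₁ (Icc a b)) (h₂ : IsRiccatiSolOn A S Q P₂ (Icc a b))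
    (herm₁ : ∀ t ∈ Icc a b, (P₁ t).IsHermitian) (herm₂ : ∀ t ∈ Icc a b, (P₂ t).IsHermitian)
    (hK : ∀ t ∈ Icc a b, ∀ y ≠ 0,
      y ⬝ᵥ ((A t)ᵀ + A t - S t * P₁ t - P₂ t * S t) *ᵥ y < K * (y ⬝ᵥ y))
    (hb : (P₁ b - P₂ b).PosSemidef) :
    (P₁ a - P₂ a + δ • 1).PosSemidef := by
  set e : ℝ → ℝ := fun u => δ * Real.exp (K * (a - u))
  have he : ∀ u, HasDerivAt e (-K * e u) u := fun u =>
    ((((hasDerivAt_id u).const_sub a).const_mul K).exp.const_mul δ).congr_deriv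
      (by simp only [e, id, mul_sub]; ring)
  have he_pos : ∀ u, 0 < e u := fun u => by positivity
  set W : ℝ → Matrix ι ι ℝ := fun u => P₁ u - P₂ u + e u • 1
  have hW := posSemidef_of_kernel_deriv_neg (W := W)
    (W' := fun u => -(riccatiMap (A u) (S u) (Q u) (P₁ u) - riccatiMap (A u) (S u) (Q u) (P₂ u))
      + (-K * e u) • 1) (a := a) (b := b)
    (fun u hu => ((herm₁ u hu).sub (herm₂ u hu)).add (PosDef.one.smul (he_pos u)).isHermitian)
    ((h₁.continuousOn.sub h₂.continuousOn).add
      ((continuous_iff_continuousAt.2 fun u => (he u).continuousAt).continuousOn.smul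
        continuousOn_const))
    (fun u hu => (((h₁ u (Ico_subset_Icc_self hu)).sub (h₂ u (Ico_subset_Icc_self hu))).add
      ((he u).smul_const 1)).congr_deriv (by abel))
    (PosDef.posSemidef_add hb (PosDef.one.smul (he_pos b)))
    ?_ a (left_mem_Icc.2 hab)
  · simpa [W, e] using hW
  intro s hs _ y hy hWy
  have hΔy : (P₁ s - P₂ s) *ᵥ y = (-e s) • y := by
    simpa [W, add_mulVec, smul_mulVec, add_eq_zero_iff_eq_neg] using hWy
  have := hK s (Ico_subset_Icc_self hs) y hy
  simp only [neg_mulVec, add_mulVec, smul_mulVec, one_mulVec, dotProduct_add, dotProduct_neg,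
    dotProduct_smul, smul_eq_mul, dotProduct_riccatiMap_sub_mulVec
      ((herm₁ s (Ico_subset_Icc_self hs)).sub (herm₂ s (Ico_subset_Icc_self hs))) hΔy]
  nlinarith [he_pos s]

theorem posSemidef_sub (hA : ContinuousOn A (Icc a b)) (hS : ContinuousOn S (Icc a b))
    (h₁ : IsRiccatiSolOn A S Q P₁ (Icc a b)) (h₂ : IsRiccatiSolOn A S Q P₂ (Icc a b))
    (herm₁ : ∀ t ∈ Icc a b, (P₁ t).IsHermitian) (herm₂ : ∀ t ∈ Icc a b, (P₂ t).IsHermitian)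
    (hb : (P₁ b - P₂ b).PosSemidef) : ∀ t ∈ Icc a b, (P₁ t - P₂ t).PosSemidef := by
  classical
  intro t ht
  set M : ℝ → Matrix ι ι ℝ := fun u => (A u)ᵀ + A u - S u * P₁ u - P₂ u * S u
  have hM : ContinuousOn M (Icc a b) :=
    ((continuous_id.matrix_transpose.comp_continuousOn hA).add hA).sub
      (hS.mul h₁.continuousOn) |>.sub (h₂.continuousOn.mul hS)
  obtain ⟨β, hβ⟩ := isCompact_Icc.exists_bound_of_continuousOn hM
  have hβ₀ : 0 ≤ β := (norm_nonneg _).trans (hβ t ht)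
  set k : ℝ := (Fintype.card ι : ℝ)
  have hK : ∀ u ∈ Icc t b, ∀ y ≠ 0, y ⬝ᵥ M u *ᵥ y < (k ^ 2 * β + 1) * (y ⬝ᵥ y) := by
    intro u hu y hy
    have hy₀ : 0 < y ⬝ᵥ y :=
      (dotProduct_self_star_nonneg y).lt_of_ne (Ne.symm (dotProduct_self_eq_zero.not.2 hy))
    calc y ⬝ᵥ M u *ᵥ y ≤ k ^ 2 * ‖M u‖ * ‖y‖ ^ 2 :=
          (le_abs_self _).trans (abs_dotProduct_mulVec_le _ _)
      _ ≤ k ^ 2 * β * (y ⬝ᵥ y) := by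
          gcongr
          · exact hβ u (Icc_subset_Icc_left ht.1 hu)
          · exact sq_norm_le_dotProduct_self y
      _ < (k ^ 2 * β + 1) * (y ⬝ᵥ y) := by linarith
  have hsub : Icc t b ⊆ Icc a b := Icc_subset_Icc_left ht.1
  exact posSemidef_of_forall_add_smul_one ((herm₁ t ht).sub (herm₂ t ht)) fun δ hδ =>
    posSemidef_sub_add_smul hδ ht.2 (h₁.mono hsub) (h₂.mono hsub)
      (fun u hu => herm₁ u (hsub hu)) (fun u hu => herm₂ u (hsub hu)) hK hb

end IsRiccatiSolOn

end

theorem isPRESolOn_iff_isRiccatiSolOn {n m r : ℕ} {A : ℝ → Matrix (Fin n) (Fin n) ℝ}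
    {B : ℝ → Matrix (Fin n) (Fin m) ℝ} {C : ℝ → Matrix (Fin r) (Fin n) ℝ}
    {R : ℝ → Matrix (Fin m) (Fin m) ℝ} {P : ℝ → Matrix (Fin n) (Fin n) ℝ} {s : Set ℝ} :
    IsPRESolOn A B C R P s ↔
      IsRiccatiSolOn A (fun t => B t * (R t)⁻¹ * (B t)ᵀ) (fun t => (C t)ᵀ * C t) P s := by
  simp only [IsPRESolOn, IsRiccatiSolOn, riccatiMap, Matrix.mul_assoc]
  exact ⟨fun h t ht => hasDerivAt_pi.2 fun i => hasDerivAt_pi.2 fun j => h t ht i j,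
    fun h t ht i j => hasDerivAt_pi.1 (hasDerivAt_pi.1 (h t ht) i) j⟩

theorem PRE_backward_sol_zero_terminal_le_global_sol_general
    {n m r : ℕ}
    (A : ℝ → Matrix (Fin n) (Fin n) ℝ) (B : ℝ → Matrix (Fin n) (Fin m) ℝ)
    (C : ℝ → Matrix (Fin r) (Fin n) ℝ) (R : ℝ → Matrix (Fin m) (Fin m) ℝ)
    (hA : Continuous A) (hB : Continuous B) (hR : Continuous R)
    (hRpos : ∀ t, (R t).PosDef)
    (Pstar : ℝ → Matrix (Fin n) (Fin n) ℝ)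
    (hPstar : IsPRESolOn A B C R Pstar Set.univ)
    (hPstarPsd : ∀ t, (Pstar t).PosSemidef)
    (τ : ℝ) (P : ℝ → Matrix (Fin n) (Fin n) ℝ)
    (hP : IsPRESolOn A B C R P (Set.Iic τ)) (hPf : P τ = 0)
    (t : ℝ) (ht : t ≤ τ) :
    (Pstar t - P t).PosSemidef := by
  have hS : Continuous fun u => B u * (R u)⁻¹ * (B u)ᵀ :=
    (hB.matrix_mul (hR.matrix_inv_of_posDef hRpos)).matrix_mul hB.matrix_transpose
  have hSherm : ∀ u, (B u * (R u)⁻¹ * (B u)ᵀ).IsHermitian := fun u => by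
    simpa [conjTranspose_eq_transpose_of_trivial] using
      isHermitian_mul_mul_conjTranspose (B u) (hRpos u).inv.isHermitian
  have hQherm : ∀ u, ((C u)ᵀ * C u).IsHermitian := fun u => by
    simpa [conjTranspose_eq_transpose_of_trivial] using isHermitian_conjTranspose_mul_self (C u)
  have hP' := (isPRESolOn_iff_isRiccatiSolOn.1 hP).mono (Icc_subset_Iic_self : Icc t τ ⊆ _)
  have hPherm := hP'.isHermitian hA.continuousOn hS.continuousOn (fun u _ => hSherm u)
    (fun u _ => hQherm u) (by rw [hPf]; exact isHermitian_zero)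
  have hPstar' := (isPRESolOn_iff_isRiccatiSolOn.1 hPstar).mono (subset_univ (Icc t τ))
  exact hPstar'.posSemidef_sub hA.continuousOn hS.continuousOn hP'
    (fun u _ => (hPstarPsd u).isHermitian) hPherm (by simpa [hPf] using hPstarPsd τ) t ⟨le_rfl, ht⟩

/-- `P(t; τ, 0) ≤ P*(t)`: if `P*` solves the PRE on all of ℝ with symmetric positive
semidefinite values and `P` solves the PRE on `(−∞, τ]` with `P(τ) = 0`, then
`P(t) ≤ P*(t)` (Loewner) for all `t ≤ τ`. -/
theorem PRE_backward_sol_zero_terminal_le_global_sol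
    {n m r : ℕ} (T : ℝ) (hT : 0 < T)
    (A : ℝ → Matrix (Fin n) (Fin n) ℝ) (B : ℝ → Matrix (Fin n) (Fin m) ℝ)
    (C : ℝ → Matrix (Fin r) (Fin n) ℝ) (R : ℝ → Matrix (Fin m) (Fin m) ℝ)
    (hA : Continuous A) (hB : Continuous B) (hC : Continuous C) (hR : Continuous R)
    (hAper : ∀ t, A (t + T) = A t) (hBper : ∀ t, B (t + T) = B t)
    (hCper : ∀ t, C (t + T) = C t) (hRper : ∀ t, R (t + T) = R t)
    (hRpos : ∀ t, (R t).PosDef)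
    (Pstar : ℝ → Matrix (Fin n) (Fin n) ℝ)
    (hPstar : IsPRESolOn A B C R Pstar Set.univ)
    (hPstarPsd : ∀ t, (Pstar t).PosSemidef)
    (τ : ℝ) (P : ℝ → Matrix (Fin n) (Fin n) ℝ)
    (hP : IsPRESolOn A B C R P (Set.Iic τ)) (hPf : P τ = 0)
    (t : ℝ) (ht : t ≤ τ) :
    (Pstar t - P t).PosSemidef :=
  PRE_backward_sol_zero_terminal_le_global_sol_general A B C R hA hB hR hRpos Pstar hPstar hPstarPsd
    τ P hP hPf t ht
end

section
/- Let T > 0, ω = 2π/T, let s₀ ≤ s₁ be reals, and let f : ℝ × ℝ → ℝ be jointly continuous with f(s, t + T) = f(s, t) for all s, t, and suppose there exists L ≥ 0 such that |f(s, t) − f(s, t')| ≤ L|t − t'| for all s ∈ [s₀, s₁] and all t, t' ∈ ℝ. For N ∈ ℕ let S_N(s, t) = a₀(s)/2 + Σ_{i=1}^N (a_i(s) cos(iωt) + b_i(s) sin(iωt)), where a_i(s) = (2/T)∫_{−T/2}^{T/2} f(s,t) cos(iωt) dt and b_i(s) = (2/T)∫_{−T/2}^{T/2} f(s,t) sin(iωt)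 dt. Then sup_{s ∈ [s₀,s₁], t ∈ ℝ} |S_N(s, t) − f(s, t)| → 0 as N → ∞. (Content of part 1 of the paper's Lemma 5: the Fourier truncation errors of a uniformly Lipschitz periodic family converge to zero uniformly in both arguments.) -/
open Filter Topology MeasureTheory

/-- The `i`-th cosine Fourier coefficient (in the second argument) of a parametrized
`T`-periodic function, at parameter value `s`. -/
noncomputable def fourierA (T ω : ℝ) (f : ℝ × ℝ → ℝ) (i : ℕ) (s : ℝ) : ℝ :=
  (2 / T) * ∫ t in (-(T / 2))..(T / 2), f (s, t) * Real.cos (i * ω * t)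

/-- The `i`-th sine Fourier coefficient (in the second argument) of a parametrized
`T`-periodic function, at parameter value `s`. -/
noncomputable def fourierB (T ω : ℝ) (f : ℝ × ℝ → ℝ) (i : ℕ) (s : ℝ) : ℝ :=
  (2 / T) * ∫ t in (-(T / 2))..(T / 2), f (s, t) * Real.sin (i * ω * t)

/-- The `N`-th Fourier partial sum (in the second argument) of a parametrized
`T`-periodic function. -/
noncomputable def fourierPartialSum (T ω : ℝ) (f : ℝ × ℝ → ℝ) (N : ℕ) (s t : ℝ) : ℝ :=
  fourierA T ω f 0 s / 2 +
    ∑ i ∈ Finset.Icc 1 N, (fourierA T ω f i s * Real.cos (i * ω * t) +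
      fourierB T ω f i s * Real.sin (i * ω * t))

/-!
Bernstein's argument, with constants uniform in the parameter. Write `c n` for the complex
Fourier coefficients of a `K`-Lipschitz function `F` on `ℝ ⧸ Tℤ`. Translating by
`h = T / 2 ^ (j + 2)` multiplies `c n` by `e^{2πinh/T} - 1`, whose modulus is at least `√2`
on the dyadic block `2 ^ j ≤ |n| < 2 ^ (j + 1)`; Bessel's inequality for `F (· + h) - F` then
bounds the `ℓ²`-mass of the block by `(K h) ^ 2 / 2`, and Cauchy–Schwarz on its at most
`2 ^ (j + 2)` indices bounds its `ℓ¹`-mass by `K T 2^{-j/2}`. Summing over `j ≥ J` shows that the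
Fourier series converges absolutely, and that its tail beyond `2 ^ J` is at most
`K T 2^{-J/2} / (1 - 2^{-1/2})`, a bound that involves only `K` and `T`.
-/

open scoped NNReal Real

theorem sum_Icc_neg_natCast_eq {M : Type*} [AddCommMonoid M] (φ : ℤ → M) (N : ℕ) :
    ∑ n ∈ Finset.Icc (-(N : ℤ)) N, φ n = φ 0 + ∑ i ∈ Finset.Icc 1 N, (φ i + φ (-i)) := by
  induction N with
  | zero => simp
  | succ N ih =>
    have hIcc : Finset.Icc (-((N + 1 : ℕ) : ℤ)) (N + 1 : ℕ)
        = insert (-((N + 1 : ℕ) : ℤ)) (insert ((N + 1 : ℕ) : ℤ) (Finset.Icc (-(N : ℤ)) N)) := by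
      ext k; simp only [Finset.mem_Icc, Finset.mem_insert]; omega
    rw [hIcc, Finset.sum_insert (by simp; omega), Finset.sum_insert (by simp), ih,
      Finset.sum_Icc_succ_top (by omega)]
    abel

theorem card_le_of_forall_natAbs_lt {v : Finset ℤ} {m : ℕ} (hv : ∀ n ∈ v, n.natAbs < m) :
    v.card ≤ 2 * m := by
  have hsub : v ⊆ Finset.Ioo (-(m : ℤ)) m := fun n hn => by
    have := hv n hn
    rw [Finset.mem_Ioo]
    omega
  have := Finset.card_le_card hsub
  rw [Int.card_Ioo] at this
  omega

theorem sum_le_of_sum_dyadic_block_le {a : ℤ → ℝ} {C r : ℝ} (hC : 0 ≤ C) (hr₀ : 0 ≤ r)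
    (hr₁ : r < 1) (hblock : ∀ (j : ℕ) (v : Finset ℤ),
      (∀ n ∈ v, 2 ^ j ≤ n.natAbs ∧ n.natAbs < 2 ^ (j + 1)) → ∑ n ∈ v, a n ≤ C * r ^ j)
    {J : ℕ} {u : Finset ℤ} (hu : ∀ n ∈ u, 2 ^ J ≤ n.natAbs) :
    ∑ n ∈ u, a n ≤ C * r ^ J / (1 - r) := by
  have hne : ∀ n ∈ u, n.natAbs ≠ 0 := fun n hn =>
    Nat.pos_iff_ne_zero.1 ((Nat.two_pow_pos J).trans_le (hu n hn))
  let scale : ℤ → ℕ := fun n => Nat.log 2 n.natAbs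
  have hmaps : ∀ n ∈ u, scale n ∈ Finset.Ico J (u.sup scale + 1) := fun n hn =>
    Finset.mem_Ico.2 ⟨(Nat.le_log_iff_pow_le one_lt_two (hne n hn)).2 (hu n hn),
      Nat.lt_succ_of_le (Finset.le_sup hn)⟩
  rw [← Finset.sum_fiberwise_of_maps_to hmaps]
  calc ∑ j ∈ Finset.Ico J (u.sup scale + 1), ∑ n ∈ u with scale n = j, a n
      ≤ ∑ j ∈ Finset.Ico J (u.sup scale + 1), C * r ^ j := by
        refine Finset.sum_le_sum fun j _ => hblock j _ fun n hn => ?_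
        obtain ⟨hnu, rfl⟩ := Finset.mem_filter.1 hn
        exact ⟨Nat.pow_log_le_self 2 (hne n hnu), Nat.lt_pow_succ_log_self one_lt_two _⟩
    _ ≤ C * r ^ J / (1 - r) := by
        rw [← Finset.mul_sum, mul_div_assoc]
        exact mul_le_mul_of_nonneg_left (geom_sum_Ico_le_of_lt_one hr₀ hr₁) hC

theorem two_le_sq_norm_exp_mul_I_sub_one {θ : ℝ} (h₁ : π / 2 ≤ |θ|) (h₂ : |θ| ≤ π) :
    2 ≤ ‖Complex.exp (θ * Complex.I) - 1‖ ^ 2 := by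
  have hcos : Real.cos θ ≤ 0 := by
    rw [← Real.cos_abs]
    exact Real.cos_nonpos_of_pi_div_two_le_of_le h₁ (by linarith [Real.pi_pos])
  rw [Complex.exp_mul_I, ← Complex.ofReal_cos, ← Complex.ofReal_sin, Complex.sq_norm,
    Complex.normSq_apply]
  simp only [Complex.sub_re, Complex.add_re, Complex.ofReal_re, Complex.mul_re, Complex.I_re,
    Complex.ofReal_im, Complex.I_im, Complex.one_re, Complex.sub_im, Complex.add_im,
    Complex.mul_im, Complex.one_im]
  -- the left side is `2 - 2 cos θ`
  nlinarith [Real.sin_sq_add_cos_sq θ]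

theorem fourier_apply_add {T : ℝ} (n : ℤ) (x y : AddCircle T) :
    fourier n (x + y) = fourier n x * fourier n y := by
  simp only [fourier_apply, smul_add, AddCircle.toCircle_add, Circle.coe_mul]

theorem two_le_sq_norm_fourier_sub_one {T : ℝ} (hT : 0 < T) {n : ℤ} {j : ℕ}
    (h₁ : 2 ^ j ≤ n.natAbs) (h₂ : n.natAbs < 2 ^ (j + 1)) :
    2 ≤ ‖fourier n ((T / 2 ^ (j + 2) : ℝ) : AddCircle T) - 1‖ ^ 2 := by
  have hθ : fourier n ((T / 2 ^ (j + 2) : ℝ) : AddCircle T)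
      = Complex.exp ((π * n / 2 ^ (j + 1) : ℝ) * Complex.I) := by
    rw [fourier_coe_apply]
    congr 1
    have : (T : ℂ) ≠ 0 := by exact_mod_cast hT.ne'
    push_cast
    field_simp
    ring
  have habs : |(n : ℝ)| = (n.natAbs : ℝ) := by simp [Nat.cast_natAbs]
  have h₁' : (2 : ℝ) ^ j ≤ |(n : ℝ)| := by rw [habs]; exact_mod_cast h₁
  have h₂' : |(n : ℝ)| ≤ 2 ^ (j + 1) := by rw [habs]; exact_mod_cast h₂.le
  have hpow : (0 : ℝ) < 2 ^ (j + 1) := by positivity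
  rw [hθ]
  apply two_le_sq_norm_exp_mul_I_sub_one <;>
    rw [abs_div, abs_mul, abs_of_pos Real.pi_pos, abs_of_pos hpow]
  · rw [le_div_iff₀ hpow, pow_succ]
    nlinarith [Real.pi_pos]
  · rw [div_le_iff₀ hpow]
    nlinarith [Real.pi_pos]

section Circle

variable {T : ℝ} [hT : Fact (0 < T)]

theorem fourierCoeff_comp_add_right {E : Type*} [NormedAddCommGroup E] [NormedSpace ℂ E]
    (f : AddCircle T → E) (a : AddCircle T) (n : ℤ) :
    fourierCoeff (fun x => f (x + a)) n = fourier n a • fourierCoeff f n := by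
  have hshift : ∀ x, fourier (-n) x = fourier n a * fourier (-n) (x + a) := fun x => by
    rw [fourier_apply_add, mul_left_comm, ← fourier_add, add_neg_cancel, fourier_zero, mul_one]
  calc fourierCoeff (fun x => f (x + a)) n
      = ∫ x, fourier n a • (fourier (-n) (x + a) • f (x + a)) ∂AddCircle.haarAddCircle := by
        simp only [fourierCoeff, smul_smul, ← hshift]
    _ = fourier n a • fourierCoeff f n := by
        rw [integral_smul, integral_add_right_eq_self (fun x => fourier (-n) x • f x) a]
        rfl

theorem fourierCoeff_comp_add_right_sub (f : C(AddCircle T, ℂ)) (a : AddCircle T) (n : ℤ) :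
    fourierCoeff (fun x => f (x + a) - f x) n = (fourier n a - 1) * fourierCoeff f n := by
  have hint : ∀ g : C(AddCircle T, ℂ), Integrable (fun x => fourier (-n) x • g x)
      AddCircle.haarAddCircle := fun g =>
    ((fourier (-n)).continuous.smul g.continuous).integrable_of_hasCompactSupport
      (.of_compactSpace _)
  rw [sub_one_mul, ← smul_eq_mul, ← fourierCoeff_comp_add_right]
  simp only [fourierCoeff, smul_sub]
  exact integral_sub (hint (f.comp (ContinuousMap.addRight a))) (hint f)

theorem sum_sq_norm_fourierCoeff_le_sq_norm (f : C(AddCircle T, ℂ)) (s : Finset ℤ) :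
    ∑ n ∈ s, ‖fourierCoeff f n‖ ^ 2 ≤ ‖f‖ ^ 2 := by
  have parseval := hasSum_sq_fourierCoeff (f.toLp 2 AddCircle.haarAddCircle ℂ)
  simp only [fourierCoeff_toLp] at parseval
  refine (sum_le_hasSum s (fun _ _ => by positivity) parseval).trans ?_
  calc ∫ t, ‖(f.toLp 2 AddCircle.haarAddCircle ℂ : AddCircle T → ℂ) t‖ ^ 2 ∂AddCircle.haarAddCircle
      = ∫ t, ‖f t‖ ^ 2 ∂AddCircle.haarAddCircle :=
        integral_congr_ae <| (f.coeFn_toLp (p := 2) (𝕜 := ℂ) AddCircle.haarAddCircle).mono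
          fun t ht => by simp only [ht]
    _ ≤ ∫ _t, ‖f‖ ^ 2 ∂AddCircle.haarAddCircle :=
        integral_mono ((by fun_prop : Continuous fun t => ‖f t‖ ^ 2).integrable_of_hasCompactSupport
          (.of_compactSpace _)) (integrable_const _) fun t => by gcongr; exact f.norm_coe_le_norm t
    _ = ‖f‖ ^ 2 := by simp

variable {K : ℝ≥0} {F : C(AddCircle T, ℂ)}

theorem LipschitzWith.two_mul_sum_sq_norm_fourierCoeff_dyadic_le (hF : LipschitzWith K F)
    {j : ℕ} {v : Finset ℤ} (hv : ∀ n ∈ v, 2 ^ j ≤ n.natAbs ∧ n.natAbs < 2 ^ (j + 1)) :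
    2 * ∑ n ∈ v, ‖fourierCoeff F n‖ ^ 2 ≤ (K * (T / 2 ^ (j + 2))) ^ 2 := by
  set h : ℝ := T / 2 ^ (j + 2)
  have hh : 0 ≤ h := by have := hT.out; positivity
  let G : C(AddCircle T, ℂ) := F.comp (ContinuousMap.addRight (h : AddCircle T)) - F
  have hG : ‖G‖ ≤ K * h := by
    refine (G.norm_le (by positivity)).2 fun x => ?_
    calc ‖F (x + h) - F x‖ ≤ K * dist (x + h) x := by rw [← dist_eq_norm]; exact hF.dist_le_mul _ _
      _ ≤ K * h := by
        gcongr
        rw [dist_eq_norm, add_sub_cancel_left]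
        exact QuotientAddGroup.norm_mk_le_norm.trans_eq (abs_of_nonneg hh)
  calc 2 * ∑ n ∈ v, ‖fourierCoeff F n‖ ^ 2
      ≤ ∑ n ∈ v, ‖fourier n (h : AddCircle T) - 1‖ ^ 2 * ‖fourierCoeff F n‖ ^ 2 := by
        rw [Finset.mul_sum]
        gcongr with n hn
        exact two_le_sq_norm_fourier_sub_one hT.out (hv n hn).1 (hv n hn).2
    _ = ∑ n ∈ v, ‖fourierCoeff G n‖ ^ 2 := by
        refine Finset.sum_congr rfl fun n _ => ?_
        rw [← mul_pow, ← norm_mul, ← fourierCoeff_comp_add_right_sub]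
        rfl
    _ ≤ ‖G‖ ^ 2 := sum_sq_norm_fourierCoeff_le_sq_norm G v
    _ ≤ (K * h) ^ 2 := by gcongr

theorem LipschitzWith.sum_norm_fourierCoeff_dyadic_le (hF : LipschitzWith K F)
    {j : ℕ} {v : Finset ℤ} (hv : ∀ n ∈ v, 2 ^ j ≤ n.natAbs ∧ n.natAbs < 2 ^ (j + 1)) :
    ∑ n ∈ v, ‖fourierCoeff F n‖ ≤ K * T * (√2)⁻¹ ^ j := by
  have hT₀ := hT.out
  have hcard : (v.card : ℝ) ≤ 2 ^ (j + 2) := by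
    have := card_le_of_forall_natAbs_lt fun n hn => (hv n hn).2
    exact_mod_cast this.trans_eq (by ring)
  have hsq : (∑ n ∈ v, ‖fourierCoeff F n‖) ^ 2 ≤ (K * T * (√2)⁻¹ ^ j) ^ 2 :=
    calc (∑ n ∈ v, ‖fourierCoeff F n‖) ^ 2
        ≤ v.card * ∑ n ∈ v, ‖fourierCoeff F n‖ ^ 2 := sq_sum_le_card_mul_sum_sq
      _ ≤ 2 ^ (j + 2) * ((K * (T / 2 ^ (j + 2))) ^ 2 / 2) := by
        have := hF.two_mul_sum_sq_norm_fourierCoeff_dyadic_le hv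
        gcongr
        linarith
      _ ≤ (K * T * (√2)⁻¹ ^ j) ^ 2 := by
        rw [mul_pow _ ((√2)⁻¹ ^ j), ← pow_mul, mul_comm j, pow_mul, inv_pow,
          Real.sq_sqrt zero_le_two]
        have h4 : (2 : ℝ) ^ (j + 2) * (1 / 2) ^ j = 4 := by
          rw [pow_add, mul_right_comm, ← mul_pow]; norm_num
        field_simp
        nlinarith [sq_nonneg ((K : ℝ) * T)]
  exact (pow_le_pow_iff_left₀ (Finset.sum_nonneg fun _ _ => norm_nonneg _) (by positivity)
    two_ne_zero).1 hsq

theorem LipschitzWith.sum_norm_fourierCoeff_le (hF : LipschitzWith K F) {J : ℕ}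
    {u : Finset ℤ} (hu : ∀ n ∈ u, 2 ^ J ≤ n.natAbs) :
    ∑ n ∈ u, ‖fourierCoeff F n‖ ≤ K * T * (√2)⁻¹ ^ J / (1 - (√2)⁻¹) :=
  have := hT.out
  sum_le_of_sum_dyadic_block_le (by positivity) (by positivity)
    (inv_lt_one_of_one_lt₀ Real.one_lt_sqrt_two)
    (fun _ _ hv => hF.sum_norm_fourierCoeff_dyadic_le hv) hu

theorem LipschitzWith.summable_fourierCoeff (hF : LipschitzWith K F) :
    Summable (fourierCoeff F) := by
  refine .of_norm <| summable_of_sum_le (fun _ => norm_nonneg _)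
    (c := ‖fourierCoeff F 0‖ + K * T * (√2)⁻¹ ^ 0 / (1 - (√2)⁻¹)) fun u => ?_
  calc ∑ n ∈ u, ‖fourierCoeff F n‖
      ≤ ∑ n ∈ insert 0 (u.erase 0), ‖fourierCoeff F n‖ :=
        Finset.sum_le_sum_of_subset_of_nonneg (fun n hn => by by_cases h : n = 0 <;> simp [h, hn])
          fun _ _ _ => norm_nonneg _
    _ = ‖fourierCoeff F 0‖ + ∑ n ∈ u.erase 0, ‖fourierCoeff F n‖ :=
        Finset.sum_insert (Finset.notMem_erase 0 u)
    _ ≤ ‖fourierCoeff F 0‖ + K * T * (√2)⁻¹ ^ 0 / (1 - (√2)⁻¹) := by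
        gcongr
        refine hF.sum_norm_fourierCoeff_le fun n hn => ?_
        simpa [Nat.one_le_iff_ne_zero] using Finset.ne_of_mem_erase hn

theorem LipschitzWith.norm_sum_fourier_sub_le (hF : LipschitzWith K F) {J N : ℕ}
    (hN : 2 ^ J ≤ N) (x : AddCircle T) :
    ‖∑ n ∈ Finset.Icc (-(N : ℤ)) N, fourierCoeff F n • fourier n x - F x‖
      ≤ K * T * (√2)⁻¹ ^ J / (1 - (√2)⁻¹) := by
  set s := Finset.Icc (-(N : ℤ)) N
  have hsum := has_pointwise_sum_fourier_series_of_summable hF.summable_fourierCoeff x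
  rw [norm_sub_rev]
  refine le_of_tendsto ((hsum.sub_const (∑ n ∈ s, fourierCoeff F n • fourier n x)).norm)
    ((eventually_ge_atTop s).mono fun u hsu => ?_)
  rw [← Finset.sum_sdiff_eq_sub hsu]
  refine (norm_sum_le _ _).trans ?_
  simp only [norm_smul, fourier_apply, Circle.norm_coe, mul_one]
  refine hF.sum_norm_fourierCoeff_le fun n hn => ?_
  have := (Finset.mem_sdiff.1 hn).2
  rw [Finset.mem_Icc] at this
  omega

end Circle

theorem Function.Periodic.lipschitzWith_lift {E : Type*} [PseudoMetricSpace E] {g : ℝ → E}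
    {T : ℝ} {K : ℝ≥0} (hg : LipschitzWith K g) (hper : Function.Periodic g T) :
    LipschitzWith K (hper.lift : AddCircle T → E) := by
  refine LipschitzWith.of_dist_le_mul fun x y => ?_
  induction x using QuotientAddGroup.induction_on with | H x =>
  induction y using QuotientAddGroup.induction_on with | H y =>
  set k := round (T⁻¹ * (x - y))
  have hdist : dist (x : AddCircle T) y = dist x (y + k * T) := by
    rw [dist_eq_norm, ← AddCircle.coe_sub, AddCircle.norm_eq, Real.dist_eq, sub_add_eq_sub_sub]
  rw [hdist, Function.Periodic.lift_coe, Function.Periodic.lift_coe, ← hper.int_mul k y, add_comm]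
  exact hg.dist_le_mul x _

section PartialSums

variable {T ω : ℝ}

theorem fourierA_mul_cos_add_fourierB_mul_sin {f : ℝ × ℝ → ℝ} {s : ℝ}
    (hf : Continuous fun x => f (s, x)) (n : ℕ) (t : ℝ) :
    fourierA T ω f n s * Real.cos (n * ω * t) + fourierB T ω f n s * Real.sin (n * ω * t)
      = 2 / T * ∫ x in (-(T / 2))..(T / 2), f (s, x) * Real.cos (n * ω * (t - x)) := by
  have hsplit : ∀ x, f (s, x) * Real.cos (n * ω * (t - x)) = f (s, x) * Real.cos (n * ω * x)
      * Real.cos (n * ω * t) + f (s, x) * Real.sin (n * ω * x) * Real.sin (n * ω * t) := fun x => by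
    rw [mul_sub, Real.cos_sub]; ring
  have hint : ∀ φ : ℝ → ℝ, Continuous φ → IntervalIntegrable
      (fun x => f (s, x) * φ (n * ω * x) * φ (n * ω * t)) volume (-(T / 2)) (T / 2) :=
    fun φ hφ => ((hf.mul (hφ.comp (by fun_prop))).mul continuous_const).intervalIntegrable _ _
  simp_rw [hsplit]
  rw [intervalIntegral.integral_add (hint _ Real.continuous_cos) (hint _ Real.continuous_sin),
    intervalIntegral.integral_mul_const, intervalIntegral.integral_mul_const, fourierA, fourierB]
  ring

variable [hT : Fact (0 < T)] {g : ℝ → ℝ} {F : AddCircle T → ℂ}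

theorem fourierCoeff_mul_fourier_eq_integral (hω : ω = 2 * π / T) (hF : ∀ x : ℝ, F x = g x)
    (m : ℤ) (t : ℝ) :
    fourierCoeff F m * fourier m (t : AddCircle T) = 1 / T *
      ∫ x in (-(T / 2))..(T / 2), (g x : ℂ) * Complex.exp ((m * ω * (t - x) : ℝ) * Complex.I) := by
  have hT₀ : (T : ℂ) ≠ 0 := by exact_mod_cast hT.out.ne'
  have hpt : ∀ x : ℝ, fourier (-m) (x : AddCircle T) • F x * fourier m (t : AddCircle T)
      = (g x : ℂ) * Complex.exp ((m * ω * (t - x) : ℝ) * Complex.I) := fun x => by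
    rw [smul_eq_mul, hF, fourier_coe_apply, fourier_coe_apply, mul_comm _ (g x : ℂ), mul_assoc,
      ← Complex.exp_add, hω]
    congr 2
    push_cast
    field_simp
    ring
  rw [fourierCoeff_eq_intervalIntegral F m (-(T / 2)), show -(T / 2) + T = T / 2 by ring,
    Complex.real_smul, mul_assoc, ← intervalIntegral.integral_mul_const]
  simp_rw [hpt]
  push_cast
  rfl

theorem fourierCoeff_mul_fourier_add_neg (hω : ω = 2 * π / T) (hF : ∀ x : ℝ, F x = g x)
    (hg : Continuous g) (n : ℕ) (t : ℝ) :
    fourierCoeff F n * fourier n (t : AddCircle T)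
        + fourierCoeff F (-n) * fourier (-n) (t : AddCircle T)
      = ((2 / T * ∫ x in (-(T / 2))..(T / 2), g x * Real.cos (n * ω * (t - x)) : ℝ) : ℂ) := by
  have hint : ∀ c : ℝ, IntervalIntegrable
      (fun x => (g x : ℂ) * Complex.exp ((c * ω * (t - x) : ℝ) * Complex.I))
      volume (-(T / 2)) (T / 2) := fun c => by
    apply Continuous.intervalIntegrable
    fun_prop
  rw [fourierCoeff_mul_fourier_eq_integral hω hF, fourierCoeff_mul_fourier_eq_integral hω hF,
    ← mul_add, ← intervalIntegral.integral_add (hint _) (hint _), Complex.ofReal_mul,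
    ← intervalIntegral.integral_ofReal]
  push_cast
  rw [← intervalIntegral.integral_const_mul, ← intervalIntegral.integral_const_mul]
  congr 1
  ext x
  rw [← mul_add, show -(n : ℂ) * ω * (t - x) = -(n * ω * (t - x)) by ring, ← Complex.two_cos]
  ring

theorem fourierPartialSum_eq_sum_fourierCoeff (hω : ω = 2 * π / T)
    {f : ℝ × ℝ → ℝ} {s : ℝ} (hF : ∀ x : ℝ, F x = f (s, x))
    (hf : Continuous fun x => f (s, x)) (N : ℕ) (t : ℝ) :
    (fourierPartialSum T ω f N s t : ℂ)
      = ∑ n ∈ Finset.Icc (-(N : ℤ)) N, fourierCoeff F n • fourier n (t : AddCircle T) := by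
  have hterm : ∀ n : ℕ, fourierCoeff F n * fourier n (t : AddCircle T)
      + fourierCoeff F (-n) * fourier (-n) (t : AddCircle T)
      = ((fourierA T ω f n s * Real.cos (n * ω * t)
          + fourierB T ω f n s * Real.sin (n * ω * t) : ℝ) : ℂ) := fun n => by
    rw [fourierCoeff_mul_fourier_add_neg hω hF hf, fourierA_mul_cos_add_fourierB_mul_sin hf]
  have hzero : fourierCoeff F 0 * fourier 0 (t : AddCircle T) = (fourierA T ω f 0 s / 2 : ℝ) := by
    have := hterm 0
    simp only [Nat.cast_zero, neg_zero, zero_mul, Real.cos_zero, Real.sin_zero] at this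
    push_cast at this ⊢
    linear_combination this / 2
  rw [sum_Icc_neg_natCast_eq, fourierPartialSum]
  simp only [smul_eq_mul, hterm, hzero]
  push_cast
  rfl

theorem abs_fourierPartialSum_sub_le (hω : ω = 2 * π / T)
    {f : ℝ × ℝ → ℝ} {s : ℝ} {K : ℝ≥0} (hf : LipschitzWith K fun x => f (s, x))
    (hper : Function.Periodic (fun x => f (s, x)) T) {J N : ℕ} (hN : 2 ^ J ≤ N) (t : ℝ) :
    |fourierPartialSum T ω f N s t - f (s, t)| ≤ K * T * (√2)⁻¹ ^ J / (1 - (√2)⁻¹) := by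
  have hfℂ : LipschitzWith K fun x => (f (s, x) : ℂ) := by
    simpa [Function.comp_def] using Complex.isometry_ofReal.lipschitz.comp hf
  have hperℂ : Function.Periodic (fun x => (f (s, x) : ℂ)) T :=
    fun x => congrArg _ (hper x)
  let F : C(AddCircle T, ℂ) := ⟨hperℂ.lift, (hperℂ.lipschitzWith_lift hfℂ).continuous⟩
  rw [← Real.norm_eq_abs, ← Complex.norm_real, Complex.ofReal_sub,
    fourierPartialSum_eq_sum_fourierCoeff hω (F := F) (fun _ => rfl) hf.continuous]
  exact (hperℂ.lipschitzWith_lift hfℂ).norm_sum_fourier_sub_le (F := F) hN t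

end PartialSums

theorem fourier_truncation_error_tendsto_uniformly_general
    (T : ℝ) (hT : 0 < T) (ω : ℝ) (hω : ω = 2 * Real.pi / T)
    (s₀ s₁ : ℝ)
    (f : ℝ × ℝ → ℝ)
    (hper : ∀ s t : ℝ, f (s, t + T) = f (s, t))
    (L : ℝ) (hL : 0 ≤ L)
    (hLip : ∀ s ∈ Set.Icc s₀ s₁, ∀ t t' : ℝ, |f (s, t) - f (s, t')| ≤ L * |t - t'|) :
    ∀ ε > 0, ∃ N₀ : ℕ, ∀ N ≥ N₀, ∀ s ∈ Set.Icc s₀ s₁, ∀ t : ℝ,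
      |fourierPartialSum T ω f N s t - f (s, t)| < ε := by
  intro ε hε
  have : Fact (0 < T) := ⟨hT⟩
  let K : ℝ≥0 := ⟨L, hL⟩
  have hbound : Tendsto (fun J : ℕ => K * T * (√2)⁻¹ ^ J / (1 - (√2)⁻¹)) atTop (𝓝 0) := by
    simpa using ((tendsto_pow_atTop_nhds_zero_of_lt_one (by positivity)
      (inv_lt_one_of_one_lt₀ Real.one_lt_sqrt_two)).const_mul (K * T)).div_const (1 - (√2)⁻¹)
  obtain ⟨J, hJ⟩ := (hbound.eventually (gt_mem_nhds hε)).exists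
  refine ⟨2 ^ J, fun N hN s hs t => ?_⟩
  have hLipK : LipschitzWith K fun x => f (s, x) :=
    LipschitzWith.of_dist_le_mul fun x y => hLip s hs x y
  exact (abs_fourierPartialSum_sub_le hω hLipK (fun x => hper s x) hN t).trans_lt hJ

/-- Part 1 of the paper's Lemma 5 (scalar form): if `f(s, ·)` is `T`-periodic, jointly
continuous, and Lipschitz in `t` uniformly over `s ∈ [s₀, s₁]`, then the Fourier partial
sums `S_N(s, t)` converge to `f(s, t)` uniformly in `(s, t) ∈ [s₀, s₁] × ℝ` as `N → ∞`. -/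
theorem fourier_truncation_error_tendsto_uniformly
    (T : ℝ) (hT : 0 < T) (ω : ℝ) (hω : ω = 2 * Real.pi / T)
    (s₀ s₁ : ℝ) (hs : s₀ ≤ s₁)
    (f : ℝ × ℝ → ℝ) (hf : Continuous f)
    (hper : ∀ s t : ℝ, f (s, t + T) = f (s, t))
    (L : ℝ) (hL : 0 ≤ L)
    (hLip : ∀ s ∈ Set.Icc s₀ s₁, ∀ t t' : ℝ, |f (s, t) - f (s, t')| ≤ L * |t - t'|) :
    ∀ ε > 0, ∃ N₀ : ℕ, ∀ N ≥ N₀, ∀ s ∈ Set.Icc s₀ s₁, ∀ t : ℝ,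
      |fourierPartialSum T ω f N s t - f (s, t)| < ε :=
  fourier_truncation_error_tendsto_uniformly_general T hT ω hω s₀ s₁ f hper L hL hLip
end
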